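/- arXiv:2506.09710 — 6 statements merged into one kernel-verified Lean document; each statement's English description precedes it below -/
import Mathlib

section
/- Suppose smooth functions f₁, f₂, f₃, f₄, ρ : ℝ⁴ → ℝ satisfy the conformal system on ℂH². Then ρ is identically zero; that is, every conformal vector field on the complex hyperbolic plane ℂH² is a Killing vector field. -/
open Real

/-- Partial derivative in the first coordinate `x`. -/
noncomputable def px (f : ℝ → ℝ → ℝ → ℝ → ℝ) (x y z a : ℝ) : ℝ :=
  deriv (fun t => f t y z a) x

/-- Partial derivative in the second coordinate `y`. -/
noncomputable def py (f : ℝ → ℝ → ℝ → ℝ → ℝ) (x y z a : ℝ) : ℝ :=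
  deriv (fun t => f x t z a) y

/-- Partial derivative in the third coordinate `z`. -/
noncomputable def pz (f : ℝ → ℝ → ℝ → ℝ → ℝ) (x y z a : ℝ) : ℝ :=
  deriv (fun t => f x y t a) z

/-- Partial derivative in the fourth coordinate `a`. -/
noncomputable def pa (f : ℝ → ℝ → ℝ → ℝ → ℝ) (x y z a : ℝ) : ℝ :=
  deriv (fun t => f x y z t) a

/-- Smoothness of a function of four real variables. -/
def Smooth4 (f : ℝ → ℝ → ℝ → ℝ → ℝ) : Prop :=
  ContDiff ℝ (⊤ : ℕ∞) (fun p : ℝ × ℝ × ℝ × ℝ => f p.1 p.2.1 p.2.2.1 p.2.2.2)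

/-- The conformal vector field system on `ℂH²` in the Damek–Ricci model, for the
vector field `ξ = f₁ V + f₂ J_Z V + f₃ Z + f₄ A` with potential function `ρ`. -/
def ConformalSystemCH2 (f₁ f₂ f₃ f₄ ρ : ℝ → ℝ → ℝ → ℝ → ℝ) : Prop :=
  ∀ x y z a : ℝ,
    2 * exp (a / 2) * (px f₁ x y z a - (y / 2) * pz f₁ x y z a) - f₄ x y z a
        = 2 * ρ x y z a ∧
    exp (a / 2) * (py f₁ x y z a + (x / 2) * pz f₁ x y z a)
        + exp (a / 2) * (px f₂ x y z a - (y / 2) * pz f₂ x y z a) = 0 ∧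
    2 * exp (a / 2) * (py f₂ x y z a + (x / 2) * pz f₂ x y z a) - f₄ x y z a
        = 2 * ρ x y z a ∧
    exp a * pz f₁ x y z a
        + exp (a / 2) * (px f₃ x y z a - (y / 2) * pz f₃ x y z a) + f₂ x y z a = 0 ∧
    exp a * pz f₂ x y z a
        + exp (a / 2) * (py f₃ x y z a + (x / 2) * pz f₃ x y z a) - f₁ x y z a = 0 ∧
    exp a * pz f₃ x y z a - f₄ x y z a = ρ x y z a ∧
    pa f₁ x y z a
        + exp (a / 2) * (px f₄ x y z a - (y / 2) * pz f₄ x y z a) + f₁ x y z a / 2 = 0 ∧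
    pa f₂ x y z a
        + exp (a / 2) * (py f₄ x y z a + (x / 2) * pz f₄ x y z a) + f₂ x y z a / 2 = 0 ∧
    pa f₃ x y z a + exp a * pz f₄ x y z a + f₃ x y z a = 0 ∧
    pa f₄ x y z a = ρ x y z a

namespace CH2
abbrev E4 := ℝ × ℝ × ℝ × ℝ
def unc (f : ℝ → ℝ → ℝ → ℝ → ℝ) : E4 → ℝ := fun p => f p.1 p.2.1 p.2.2.1 p.2.2.2
def v1 : E4 := (1,0,0,0)
def v2 : E4 := (0,1,0,0)
def v3 : E4 := (0,0,1,0)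
def v4 : E4 := (0,0,0,1)

theorem smooth_unc {f} (hf : Smooth4 f) : ContDiff ℝ (⊤ : ℕ∞) (unc f) := hf

theorem hasDerivAt_slice1 {f} (hf : Smooth4 f) (x y z a : ℝ) :
    HasDerivAt (fun t => f t y z a) (fderiv ℝ (unc f) (x,y,z,a) v1) x := by
  have hF := (hf.differentiable (by simp) (x,y,z,a)).hasFDerivAt
  have hl : HasDerivAt (fun t : ℝ => ((t,y,z,a) : E4)) v1 x := by
    exact HasDerivAt.prodMk (hasDerivAt_id x) (hasDerivAt_const _ _)
  exact hF.comp_hasDerivAt x hl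

theorem hasDerivAt_slice2 {f} (hf : Smooth4 f) (x y z a : ℝ) :
    HasDerivAt (fun t => f x t z a) (fderiv ℝ (unc f) (x,y,z,a) v2) y := by
  have hF := (hf.differentiable (by simp) (x,y,z,a)).hasFDerivAt
  have hl : HasDerivAt (fun t : ℝ => ((x,t,z,a) : E4)) v2 y :=
    HasDerivAt.prodMk (hasDerivAt_const _ _) (HasDerivAt.prodMk (hasDerivAt_id y) (hasDerivAt_const _ _))
  exact hF.comp_hasDerivAt y hl

theorem hasDerivAt_slice3 {f} (hf : Smooth4 f) (x y z a : ℝ) :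
    HasDerivAt (fun t => f x y t a) (fderiv ℝ (unc f) (x,y,z,a) v3) z := by
  have hF := (hf.differentiable (by simp) (x,y,z,a)).hasFDerivAt
  have hl : HasDerivAt (fun t : ℝ => ((x,y,t,a) : E4)) v3 z :=
    HasDerivAt.prodMk (hasDerivAt_const _ _) (HasDerivAt.prodMk (hasDerivAt_const _ _)
      (HasDerivAt.prodMk (hasDerivAt_id z) (hasDerivAt_const _ _)))
  exact hF.comp_hasDerivAt z hl

theorem hasDerivAt_slice4 {f} (hf : Smooth4 f) (x y z a : ℝ) :
    HasDerivAt (fun t => f x y z t) (fderiv ℝ (unc f) (x,y,z,a) v4) a := by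
  have hF := (hf.differentiable (by simp) (x,y,z,a)).hasFDerivAt
  have hl : HasDerivAt (fun t : ℝ => ((x,y,z,t) : E4)) v4 a :=
    HasDerivAt.prodMk (hasDerivAt_const _ _) (HasDerivAt.prodMk (hasDerivAt_const _ _)
      (HasDerivAt.prodMk (hasDerivAt_const _ _) (hasDerivAt_id a)))
  exact hF.comp_hasDerivAt a hl

theorem px_eq {f} (hf : Smooth4 f) (x y z a : ℝ) :
    px f x y z a = fderiv ℝ (unc f) (x,y,z,a) v1 := (hasDerivAt_slice1 hf x y z a).deriv
theorem py_eq {f} (hf : Smooth4 f) (x y z a : ℝ) :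
    py f x y z a = fderiv ℝ (unc f) (x,y,z,a) v2 := (hasDerivAt_slice2 hf x y z a).deriv
theorem pz_eq {f} (hf : Smooth4 f) (x y z a : ℝ) :
    pz f x y z a = fderiv ℝ (unc f) (x,y,z,a) v3 := (hasDerivAt_slice3 hf x y z a).deriv
theorem pa_eq {f} (hf : Smooth4 f) (x y z a : ℝ) :
    pa f x y z a = fderiv ℝ (unc f) (x,y,z,a) v4 := (hasDerivAt_slice4 hf x y z a).deriv

theorem smooth_dir {F : E4 → ℝ} (hF : ContDiff ℝ (⊤ : ℕ∞) F) (v : E4) :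
    ContDiff ℝ (⊤ : ℕ∞) (fun p => fderiv ℝ F p v) :=
  (hF.fderiv_right (by simp)).clm_apply contDiff_const

theorem unc_px {f} (hf : Smooth4 f) : unc (px f) = fun p => fderiv ℝ (unc f) p v1 :=
  funext fun p => px_eq hf p.1 p.2.1 p.2.2.1 p.2.2.2
theorem unc_py {f} (hf : Smooth4 f) : unc (py f) = fun p => fderiv ℝ (unc f) p v2 :=
  funext fun p => py_eq hf p.1 p.2.1 p.2.2.1 p.2.2.2
theorem unc_pz {f} (hf : Smooth4 f) : unc (pz f) = fun p => fderiv ℝ (unc f) p v3 :=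
  funext fun p => pz_eq hf p.1 p.2.1 p.2.2.1 p.2.2.2
theorem unc_pa {f} (hf : Smooth4 f) : unc (pa f) = fun p => fderiv ℝ (unc f) p v4 :=
  funext fun p => pa_eq hf p.1 p.2.1 p.2.2.1 p.2.2.2

theorem _root_.Smooth4.px {f} (hf : Smooth4 f) : Smooth4 (px f) := by
  show ContDiff ℝ (⊤ : ℕ∞) (unc (_root_.px f)); rw [unc_px hf]; exact smooth_dir hf v1
theorem _root_.Smooth4.py {f} (hf : Smooth4 f) : Smooth4 (py f) := by
  show ContDiff ℝ (⊤ : ℕ∞) (unc (_root_.py f)); rw [unc_py hf]; exact smooth_dir hf v2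
theorem _root_.Smooth4.pz {f} (hf : Smooth4 f) : Smooth4 (pz f) := by
  show ContDiff ℝ (⊤ : ℕ∞) (unc (_root_.pz f)); rw [unc_pz hf]; exact smooth_dir hf v3
theorem _root_.Smooth4.pa {f} (hf : Smooth4 f) : Smooth4 (pa f) := by
  show ContDiff ℝ (⊤ : ℕ∞) (unc (_root_.pa f)); rw [unc_pa hf]; exact smooth_dir hf v4

-- symmetry of second directional derivatives
theorem dir_swap {F : E4 → ℝ} (hF : ContDiff ℝ (⊤ : ℕ∞) F) (u v : E4) (q : E4) :
    fderiv ℝ (fun p => fderiv ℝ F p v) q u = fderiv ℝ (fun p => fderiv ℝ F p u) q v := by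
  have hd : ∀ p, HasFDerivAt F (fderiv ℝ F p) p := fun p =>
    (hF.differentiable (by simp) p).hasFDerivAt
  have hdd : HasFDerivAt (fderiv ℝ F) (fderiv ℝ (fderiv ℝ F) q) q :=
    (((hF.fderiv_right (m := (⊤ : ℕ∞)) (by simp)).differentiable (by simp)) q).hasFDerivAt
  have hdiff : DifferentiableAt ℝ (fderiv ℝ F) q :=
    ((hF.fderiv_right (m := (⊤ : ℕ∞)) (by simp)).differentiable (by simp)) q
  have h1 : ∀ w : E4, fderiv ℝ (fun p => fderiv ℝ F p w) q
      = (fderiv ℝ (fderiv ℝ F) q).flip w := by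
    intro w
    have := fderiv_clm_apply (c := fderiv ℝ F) (u := fun _ => w) hdiff
      (differentiableAt_const w)
    simpa using this
  have hsym := second_derivative_symmetric hd hdd u v
  rw [h1 v, h1 u]
  simpa using hsym

end CH2

namespace CH2

-- Clairaut swaps
theorem swap_xy {f} (hf : Smooth4 f) (x y z a : ℝ) :
    px (py f) x y z a = py (px f) x y z a := by
  rw [px_eq hf.py, py_eq hf.px, unc_py hf, unc_px hf]
  exact dir_swap hf v1 v2 _
theorem swap_xz {f} (hf : Smooth4 f) (x y z a : ℝ) :
    px (pz f) x y z a = pz (px f) x y z a := by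
  rw [px_eq hf.pz, pz_eq hf.px, unc_pz hf, unc_px hf]
  exact dir_swap hf v1 v3 _
theorem swap_yz {f} (hf : Smooth4 f) (x y z a : ℝ) :
    py (pz f) x y z a = pz (py f) x y z a := by
  rw [py_eq hf.pz, pz_eq hf.py, unc_pz hf, unc_py hf]
  exact dir_swap hf v2 v3 _
theorem swap_xa {f} (hf : Smooth4 f) (x y z a : ℝ) :
    px (pa f) x y z a = pa (px f) x y z a := by
  rw [px_eq hf.pa, pa_eq hf.px, unc_pa hf, unc_px hf]
  exact dir_swap hf v1 v4 _
theorem swap_ya {f} (hf : Smooth4 f) (x y z a : ℝ) :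
    py (pa f) x y z a = pa (py f) x y z a := by
  rw [py_eq hf.pa, pa_eq hf.py, unc_pa hf, unc_py hf]
  exact dir_swap hf v2 v4 _
theorem swap_za {f} (hf : Smooth4 f) (x y z a : ℝ) :
    pz (pa f) x y z a = pa (pz f) x y z a := by
  rw [pz_eq hf.pa, pa_eq hf.pz, unc_pa hf, unc_pz hf]
  exact dir_swap hf v3 v4 _

-- slice HasDerivAt with partial-derivative values
theorem hd1 {f} (hf : Smooth4 f) (x y z a : ℝ) :
    HasDerivAt (fun t => f t y z a) (px f x y z a) x := by
  rw [px_eq hf]; exact hasDerivAt_slice1 hf x y z a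
theorem hd2 {f} (hf : Smooth4 f) (x y z a : ℝ) :
    HasDerivAt (fun t => f x t z a) (py f x y z a) y := by
  rw [py_eq hf]; exact hasDerivAt_slice2 hf x y z a
theorem hd3 {f} (hf : Smooth4 f) (x y z a : ℝ) :
    HasDerivAt (fun t => f x y t a) (pz f x y z a) z := by
  rw [pz_eq hf]; exact hasDerivAt_slice3 hf x y z a
theorem hd4 {f} (hf : Smooth4 f) (x y z a : ℝ) :
    HasDerivAt (fun t => f x y z t) (pa f x y z a) a := by
  rw [pa_eq hf]; exact hasDerivAt_slice4 hf x y z a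

-- the left-invariant frame operators
noncomputable def Vd (f : ℝ → ℝ → ℝ → ℝ → ℝ) : ℝ → ℝ → ℝ → ℝ → ℝ :=
  fun x y z a => Real.exp (a/2) * (px f x y z a - y/2 * pz f x y z a)
noncomputable def Jd (f : ℝ → ℝ → ℝ → ℝ → ℝ) : ℝ → ℝ → ℝ → ℝ → ℝ :=
  fun x y z a => Real.exp (a/2) * (py f x y z a + x/2 * pz f x y z a)
noncomputable def Zd (f : ℝ → ℝ → ℝ → ℝ → ℝ) : ℝ → ℝ → ℝ → ℝ → ℝ :=
  fun x y z a => Real.exp a * pz f x y z a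
noncomputable def Ad (f : ℝ → ℝ → ℝ → ℝ → ℝ) : ℝ → ℝ → ℝ → ℝ → ℝ := pa f

theorem _root_.Smooth4.Vd {f} (hf : Smooth4 f) : Smooth4 (Vd f) := by
  have h1 : ContDiff ℝ (⊤ : ℕ∞) (fun p : E4 => Real.exp (p.2.2.2/2)) :=
    Real.contDiff_exp.comp ((contDiff_snd.comp (contDiff_snd.comp contDiff_snd)).div_const 2)
  have h2 : ContDiff ℝ (⊤ : ℕ∞) (unc (px f)) := hf.px
  have h3 : ContDiff ℝ (⊤ : ℕ∞) (unc (pz f)) := hf.pz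
  exact h1.mul (h2.sub (((contDiff_fst.comp contDiff_snd).div_const 2).mul h3))
theorem _root_.Smooth4.Jd {f} (hf : Smooth4 f) : Smooth4 (Jd f) := by
  have h1 : ContDiff ℝ (⊤ : ℕ∞) (fun p : E4 => Real.exp (p.2.2.2/2)) :=
    Real.contDiff_exp.comp ((contDiff_snd.comp (contDiff_snd.comp contDiff_snd)).div_const 2)
  have h2 : ContDiff ℝ (⊤ : ℕ∞) (unc (py f)) := hf.py
  have h3 : ContDiff ℝ (⊤ : ℕ∞) (unc (pz f)) := hf.pz
  exact h1.mul (h2.add ((contDiff_fst.div_const 2).mul h3))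
theorem _root_.Smooth4.Zd {f} (hf : Smooth4 f) : Smooth4 (Zd f) := by
  have h1 : ContDiff ℝ (⊤ : ℕ∞) (fun p : E4 => Real.exp p.2.2.2) :=
    Real.contDiff_exp.comp (contDiff_snd.comp (contDiff_snd.comp contDiff_snd))
  have h3 : ContDiff ℝ (⊤ : ℕ∞) (unc (pz f)) := hf.pz
  exact h1.mul h3
theorem _root_.Smooth4.Ad {f} (hf : Smooth4 f) : Smooth4 (Ad f) := hf.pa

-- partial derivatives of Vd
theorem px_Vd {f} (hf : Smooth4 f) (x y z a : ℝ) :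
    px (Vd f) x y z a
      = Real.exp (a/2) * (px (px f) x y z a - y/2 * px (pz f) x y z a) :=
  (((hd1 hf.px x y z a).sub ((hd1 hf.pz x y z a).const_mul (y/2))).const_mul
    (Real.exp (a/2))).deriv
theorem py_Vd {f} (hf : Smooth4 f) (x y z a : ℝ) :
    py (Vd f) x y z a
      = Real.exp (a/2) * (py (px f) x y z a
        - (1/2 * pz f x y z a + y/2 * py (pz f) x y z a)) := by
  have h : HasDerivAt (fun t => Real.exp (a/2) * (px f x t z a - t/2 * pz f x t z a))
      (Real.exp (a/2) * (py (px f) x y z a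
        - (1/2 * pz f x y z a + y/2 * py (pz f) x y z a))) y := by
    have hyy : HasDerivAt (fun t : ℝ => t/2) (1/2) y := by
      simpa using (hasDerivAt_id y).div_const 2
    have hm := hyy.mul (hd2 hf.pz x y z a)
    have := ((hd2 hf.px x y z a).sub hm).const_mul (Real.exp (a/2))
    exact this
  exact h.deriv
theorem pz_Vd {f} (hf : Smooth4 f) (x y z a : ℝ) :
    pz (Vd f) x y z a
      = Real.exp (a/2) * (pz (px f) x y z a - y/2 * pz (pz f) x y z a) :=
  (((hd3 hf.px x y z a).sub ((hd3 hf.pz x y z a).const_mul (y/2))).const_mul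
    (Real.exp (a/2))).deriv
theorem pa_Vd {f} (hf : Smooth4 f) (x y z a : ℝ) :
    pa (Vd f) x y z a
      = Real.exp (a/2) * (1/2) * (px f x y z a - y/2 * pz f x y z a)
        + Real.exp (a/2) * (pa (px f) x y z a - y/2 * pa (pz f) x y z a) := by
  have he : HasDerivAt (fun t : ℝ => Real.exp (t/2)) (Real.exp (a/2) * (1/2)) a := by
    simpa using ((hasDerivAt_id a).div_const 2).exp
  have h := he.mul ((hd4 hf.px x y z a).sub ((hd4 hf.pz x y z a).const_mul (y/2)))
  exact h.deriv
theorem px_Jd {f} (hf : Smooth4 f) (x y z a : ℝ) :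
    px (Jd f) x y z a
      = Real.exp (a/2) * (px (py f) x y z a
        + (1/2 * pz f x y z a + x/2 * px (pz f) x y z a)) := by
  have hxx : HasDerivAt (fun t : ℝ => t/2) (1/2) x := by
    simpa using (hasDerivAt_id x).div_const 2
  have h := ((hd1 hf.py x y z a).add (hxx.mul (hd1 hf.pz x y z a))).const_mul
    (Real.exp (a/2))
  have h2 : HasDerivAt (fun t => Real.exp (a/2) * (py f t y z a + t/2 * pz f t y z a))
      (Real.exp (a/2) * (px (py f) x y z a
        + (1/2 * pz f x y z a + x/2 * px (pz f) x y z a))) x := by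
    exact h
  exact h2.deriv
theorem py_Jd {f} (hf : Smooth4 f) (x y z a : ℝ) :
    py (Jd f) x y z a
      = Real.exp (a/2) * (py (py f) x y z a + x/2 * py (pz f) x y z a) :=
  (((hd2 hf.py x y z a).add ((hd2 hf.pz x y z a).const_mul (x/2))).const_mul
    (Real.exp (a/2))).deriv
theorem pz_Jd {f} (hf : Smooth4 f) (x y z a : ℝ) :
    pz (Jd f) x y z a
      = Real.exp (a/2) * (pz (py f) x y z a + x/2 * pz (pz f) x y z a) :=
  (((hd3 hf.py x y z a).add ((hd3 hf.pz x y z a).const_mul (x/2))).const_mul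
    (Real.exp (a/2))).deriv
theorem pa_Jd {f} (hf : Smooth4 f) (x y z a : ℝ) :
    pa (Jd f) x y z a
      = Real.exp (a/2) * (1/2) * (py f x y z a + x/2 * pz f x y z a)
        + Real.exp (a/2) * (pa (py f) x y z a + x/2 * pa (pz f) x y z a) := by
  have he : HasDerivAt (fun t : ℝ => Real.exp (t/2)) (Real.exp (a/2) * (1/2)) a := by
    simpa using ((hasDerivAt_id a).div_const 2).exp
  exact (he.mul ((hd4 hf.py x y z a).add ((hd4 hf.pz x y z a).const_mul (x/2)))).deriv
theorem px_Zd {f} (hf : Smooth4 f) (x y z a : ℝ) :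
    px (Zd f) x y z a = Real.exp a * px (pz f) x y z a :=
  ((hd1 hf.pz x y z a).const_mul (Real.exp a)).deriv
theorem py_Zd {f} (hf : Smooth4 f) (x y z a : ℝ) :
    py (Zd f) x y z a = Real.exp a * py (pz f) x y z a :=
  ((hd2 hf.pz x y z a).const_mul (Real.exp a)).deriv
theorem pz_Zd {f} (hf : Smooth4 f) (x y z a : ℝ) :
    pz (Zd f) x y z a = Real.exp a * pz (pz f) x y z a :=
  ((hd3 hf.pz x y z a).const_mul (Real.exp a)).deriv
theorem pa_Zd {f} (hf : Smooth4 f) (x y z a : ℝ) :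
    pa (Zd f) x y z a
      = Real.exp a * pz f x y z a + Real.exp a * pa (pz f) x y z a := by
  have he : HasDerivAt (fun t : ℝ => Real.exp t) (Real.exp a) a := Real.hasDerivAt_exp a
  have h := he.mul (hd4 hf.pz x y z a)
  have h2 : HasDerivAt (fun t => Real.exp t * pz f x y z t)
      (Real.exp a * pz f x y z a + Real.exp a * pa (pz f) x y z a) a := by
    exact h
  exact h2.deriv

-- linearity of the partials (for combinations c*g + d*h)
theorem px_lin {g h} (hg : Smooth4 g) (hh : Smooth4 h) (c d x y z a : ℝ) :
    px (fun x y z a => c * g x y z a + d * h x y z a) x y z a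
      = c * px g x y z a + d * px h x y z a :=
  (((hd1 hg x y z a).const_mul c).add ((hd1 hh x y z a).const_mul d)).deriv
theorem py_lin {g h} (hg : Smooth4 g) (hh : Smooth4 h) (c d x y z a : ℝ) :
    py (fun x y z a => c * g x y z a + d * h x y z a) x y z a
      = c * py g x y z a + d * py h x y z a :=
  (((hd2 hg x y z a).const_mul c).add ((hd2 hh x y z a).const_mul d)).deriv
theorem pz_lin {g h} (hg : Smooth4 g) (hh : Smooth4 h) (c d x y z a : ℝ) :
    pz (fun x y z a => c * g x y z a + d * h x y z a) x y z a
      = c * pz g x y z a + d * pz h x y z a :=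
  (((hd3 hg x y z a).const_mul c).add ((hd3 hh x y z a).const_mul d)).deriv
theorem pa_lin {g h} (hg : Smooth4 g) (hh : Smooth4 h) (c d x y z a : ℝ) :
    pa (fun x y z a => c * g x y z a + d * h x y z a) x y z a
      = c * pa g x y z a + d * pa h x y z a :=
  (((hd4 hg x y z a).const_mul c).add ((hd4 hh x y z a).const_mul d)).deriv

theorem Vd_lin {g h} (hg : Smooth4 g) (hh : Smooth4 h) (c d x y z a : ℝ) :
    Vd (fun x y z a => c * g x y z a + d * h x y z a) x y z a
      = c * Vd g x y z a + d * Vd h x y z a := by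
  unfold Vd; rw [px_lin hg hh, pz_lin hg hh]; ring
theorem Jd_lin {g h} (hg : Smooth4 g) (hh : Smooth4 h) (c d x y z a : ℝ) :
    Jd (fun x y z a => c * g x y z a + d * h x y z a) x y z a
      = c * Jd g x y z a + d * Jd h x y z a := by
  unfold Jd; rw [py_lin hg hh, pz_lin hg hh]; ring
theorem Zd_lin {g h} (hg : Smooth4 g) (hh : Smooth4 h) (c d x y z a : ℝ) :
    Zd (fun x y z a => c * g x y z a + d * h x y z a) x y z a
      = c * Zd g x y z a + d * Zd h x y z a := by
  unfold Zd; rw [pz_lin hg hh]; ring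
theorem Ad_lin {g h} (hg : Smooth4 g) (hh : Smooth4 h) (c d x y z a : ℝ) :
    Ad (fun x y z a => c * g x y z a + d * h x y z a) x y z a
      = c * Ad g x y z a + d * Ad h x y z a := by
  unfold Ad; rw [pa_lin hg hh]

end CH2

namespace CH2

theorem comm_ZV {f} (hf : Smooth4 f) (x y z a : ℝ) :
    Zd (Vd f) x y z a = Vd (Zd f) x y z a := by
  show Real.exp a * pz (Vd f) x y z a
    = Real.exp (a/2) * (px (Zd f) x y z a - y/2 * pz (Zd f) x y z a)
  rw [pz_Vd hf, px_Zd hf, pz_Zd hf, swap_xz hf]; ring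

theorem comm_ZJ {f} (hf : Smooth4 f) (x y z a : ℝ) :
    Zd (Jd f) x y z a = Jd (Zd f) x y z a := by
  show Real.exp a * pz (Jd f) x y z a
    = Real.exp (a/2) * (py (Zd f) x y z a + x/2 * pz (Zd f) x y z a)
  rw [pz_Jd hf, py_Zd hf, pz_Zd hf, swap_yz hf]; ring

theorem comm_VJ {f} (hf : Smooth4 f) (x y z a : ℝ) :
    Vd (Jd f) x y z a - Jd (Vd f) x y z a = Zd f x y z a := by
  have hE : Real.exp (a/2) * Real.exp (a/2) = Real.exp a := by
    rw [← Real.exp_add]; norm_num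
  show Real.exp (a/2) * (px (Jd f) x y z a - y/2 * pz (Jd f) x y z a)
      - Real.exp (a/2) * (py (Vd f) x y z a + x/2 * pz (Vd f) x y z a)
    = Real.exp a * pz f x y z a
  rw [px_Jd hf, pz_Jd hf, py_Vd hf, pz_Vd hf, swap_xy hf, swap_xz hf, swap_yz hf]
  linear_combination (pz f x y z a) * hE

theorem comm_AV {f} (hf : Smooth4 f) (x y z a : ℝ) :
    Ad (Vd f) x y z a = Vd (Ad f) x y z a + (1/2) * Vd f x y z a := by
  simp only [Ad]
  rw [pa_Vd hf]
  simp only [Vd]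
  rw [swap_xa hf, swap_za hf]; ring

theorem comm_AJ {f} (hf : Smooth4 f) (x y z a : ℝ) :
    Ad (Jd f) x y z a = Jd (Ad f) x y z a + (1/2) * Jd f x y z a := by
  simp only [Ad]
  rw [pa_Jd hf]
  simp only [Jd]
  rw [swap_ya hf, swap_za hf]; ring

theorem comm_AZ {f} (hf : Smooth4 f) (x y z a : ℝ) :
    Ad (Zd f) x y z a = Zd (Ad f) x y z a + Zd f x y z a := by
  simp only [Ad]
  rw [pa_Zd hf]
  simp only [Zd]
  rw [swap_za hf]; ring

end CH2

open CH2

/-- Every conformal vector field on the complex hyperbolic plane `ℂH²` is Killing: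
if smooth `f₁, f₂, f₃, f₄, ρ` satisfy the conformal system, then `ρ ≡ 0`. -/
theorem conformal_vector_field_on_CH2_is_Killing
    (f₁ f₂ f₃ f₄ ρ : ℝ → ℝ → ℝ → ℝ → ℝ)
    (hf₁ : Smooth4 f₁) (hf₂ : Smooth4 f₂) (hf₃ : Smooth4 f₃) (hf₄ : Smooth4 f₄)
    (hρ : Smooth4 ρ)
    (hsys : ConformalSystemCH2 f₁ f₂ f₃ f₄ ρ) :
    ∀ x y z a : ℝ, ρ x y z a = 0 := by
  -- translate the system into the frame operators
  have E1 : ∀ x y z a : ℝ, Vd f₁ x y z a = ρ x y z a + f₄ x y z a / 2 := by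
    intro x y z a; have h := (hsys x y z a).1
    show Real.exp (a/2) * (px f₁ x y z a - y/2 * pz f₁ x y z a) = _
    linarith
  have E2 : ∀ x y z a : ℝ, Vd f₂ x y z a = -Jd f₁ x y z a := by
    intro x y z a; have h := (hsys x y z a).2.1
    simp only [Vd, Jd]; linarith
  have E3 : ∀ x y z a : ℝ, Jd f₂ x y z a = ρ x y z a + f₄ x y z a / 2 := by
    intro x y z a; have h := (hsys x y z a).2.2.1
    simp only [Jd]; linarith
  have E4 : ∀ x y z a : ℝ, Zd f₁ x y z a = -Vd f₃ x y z a - f₂ x y z a := by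
    intro x y z a; have h := (hsys x y z a).2.2.2.1
    simp only [Zd, Vd]; linarith
  have E5 : ∀ x y z a : ℝ, Zd f₂ x y z a = f₁ x y z a - Jd f₃ x y z a := by
    intro x y z a; have h := (hsys x y z a).2.2.2.2.1
    simp only [Zd, Jd]; linarith
  have E6 : ∀ x y z a : ℝ, Zd f₃ x y z a = ρ x y z a + f₄ x y z a := by
    intro x y z a; have h := (hsys x y z a).2.2.2.2.2.1
    simp only [Zd]; linarith
  have E7 : ∀ x y z a : ℝ, Ad f₁ x y z a = -Vd f₄ x y z a - f₁ x y z a / 2 := by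
    intro x y z a; have h := (hsys x y z a).2.2.2.2.2.2.1
    simp only [Ad, Vd]; linarith
  have E8 : ∀ x y z a : ℝ, Ad f₂ x y z a = -Jd f₄ x y z a - f₂ x y z a / 2 := by
    intro x y z a; have h := (hsys x y z a).2.2.2.2.2.2.2.1
    simp only [Ad, Jd]; linarith
  have E9 : ∀ x y z a : ℝ, Zd f₄ x y z a = -Ad f₃ x y z a - f₃ x y z a := by
    intro x y z a; have h := (hsys x y z a).2.2.2.2.2.2.2.2.1
    simp only [Zd, Ad]; linarith
  have E10 : ∀ x y z a : ℝ, Ad f₄ x y z a = ρ x y z a := by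
    intro x y z a; have h := (hsys x y z a).2.2.2.2.2.2.2.2.2
    simp only [Ad]; linarith
  -- function-level forms for substitution under the operators
  have hVf₂fun : Vd f₂
      = fun x y z a => (-1 : ℝ) * Jd f₁ x y z a + (0 : ℝ) * Jd f₁ x y z a := by
    funext x y z a; rw [E2 x y z a]; ring
  have hZf₂fun : Zd f₂
      = fun x y z a => (1 : ℝ) * f₁ x y z a + (-1 : ℝ) * Jd f₃ x y z a := by
    funext x y z a; rw [E5 x y z a]; ring
  have hZf₁fun : Zd f₁
      = fun x y z a => (-1 : ℝ) * Vd f₃ x y z a + (-1 : ℝ) * f₂ x y z a := by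
    funext x y z a; rw [E4 x y z a]; ring
  have hAf₂fun : Ad f₂
      = fun x y z a => (-1 : ℝ) * Jd f₄ x y z a + (-(1/2) : ℝ) * f₂ x y z a := by
    funext x y z a; rw [E8 x y z a]; ring
  have hAf₁fun : Ad f₁
      = fun x y z a => (-1 : ℝ) * Vd f₄ x y z a + (-(1/2) : ℝ) * f₁ x y z a := by
    funext x y z a; rw [E7 x y z a]; ring
  have hZf₄fun : Zd f₄
      = fun x y z a => (-1 : ℝ) * Ad f₃ x y z a + (-1 : ℝ) * f₃ x y z a := by
    funext x y z a; rw [E9 x y z a]; ring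
  have hZf₃fun : Zd f₃
      = fun x y z a => (1 : ℝ) * ρ x y z a + (1 : ℝ) * f₄ x y z a := by
    funext x y z a; rw [E6 x y z a]; ring
  -- key identity 1 : Z(V f₂) = ρ/2
  have key1 : ∀ x y z a : ℝ, Zd (Vd f₂) x y z a = ρ x y z a / 2 := by
    intro x y z a
    have h1 : Zd (Vd f₂) x y z a = Vd (Zd f₂) x y z a := comm_ZV hf₂ x y z a
    have h2 : Vd (Zd f₂) x y z a
        = (1 : ℝ) * Vd f₁ x y z a + (-1 : ℝ) * Vd (Jd f₃) x y z a := by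
      rw [hZf₂fun]; exact Vd_lin hf₁ hf₃.Jd 1 (-1) x y z a
    have h3 : Zd (Vd f₂) x y z a
        = (-1 : ℝ) * Zd (Jd f₁) x y z a + (0 : ℝ) * Zd (Jd f₁) x y z a := by
      rw [hVf₂fun]; exact Zd_lin hf₁.Jd hf₁.Jd (-1) 0 x y z a
    have h4 : Zd (Jd f₁) x y z a = Jd (Zd f₁) x y z a := comm_ZJ hf₁ x y z a
    have h5 : Jd (Zd f₁) x y z a
        = (-1 : ℝ) * Jd (Vd f₃) x y z a + (-1 : ℝ) * Jd f₂ x y z a := by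
      rw [hZf₁fun]; exact Jd_lin hf₃.Vd hf₂ (-1) (-1) x y z a
    have h6 : Vd (Jd f₃) x y z a - Jd (Vd f₃) x y z a = Zd f₃ x y z a :=
      comm_VJ hf₃ x y z a
    have e1 := E1 x y z a; have e3 := E3 x y z a; have e6 := E6 x y z a
    linarith
  -- key identity 2 : A(V f₂) = -(1/2) Z f₄
  have key2 : ∀ x y z a : ℝ, Ad (Vd f₂) x y z a = -(1/2) * Zd f₄ x y z a := by
    intro x y z a
    have h1 : Ad (Vd f₂) x y z a
        = Vd (Ad f₂) x y z a + (1/2) * Vd f₂ x y z a := comm_AV hf₂ x y z a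
    have h2 : Vd (Ad f₂) x y z a
        = (-1 : ℝ) * Vd (Jd f₄) x y z a + (-(1/2) : ℝ) * Vd f₂ x y z a := by
      rw [hAf₂fun]; exact Vd_lin hf₄.Jd hf₂ (-1) (-(1/2)) x y z a
    have h3 : Ad (Vd f₂) x y z a
        = (-1 : ℝ) * Ad (Jd f₁) x y z a + (0 : ℝ) * Ad (Jd f₁) x y z a := by
      rw [hVf₂fun]; exact Ad_lin hf₁.Jd hf₁.Jd (-1) 0 x y z a
    have h4 : Ad (Jd f₁) x y z a
        = Jd (Ad f₁) x y z a + (1/2) * Jd f₁ x y z a := comm_AJ hf₁ x y z a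
    have h5 : Jd (Ad f₁) x y z a
        = (-1 : ℝ) * Jd (Vd f₄) x y z a + (-(1/2) : ℝ) * Jd f₁ x y z a := by
      rw [hAf₁fun]; exact Jd_lin hf₄.Vd hf₁ (-1) (-(1/2)) x y z a
    have h6 : Vd (Jd f₄) x y z a - Jd (Vd f₄) x y z a = Zd f₄ x y z a :=
      comm_VJ hf₄ x y z a
    linarith
  -- key identity 3 : Z(Z f₄) = -A ρ - ρ
  have key3 : ∀ x y z a : ℝ, Zd (Zd f₄) x y z a = -Ad ρ x y z a - ρ x y z a := by
    intro x y z a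
    have h1 : Zd (Zd f₄) x y z a
        = (-1 : ℝ) * Zd (Ad f₃) x y z a + (-1 : ℝ) * Zd f₃ x y z a := by
      rw [hZf₄fun]; exact Zd_lin hf₃.Ad hf₃ (-1) (-1) x y z a
    have h2 : Ad (Zd f₃) x y z a
        = Zd (Ad f₃) x y z a + Zd f₃ x y z a := comm_AZ hf₃ x y z a
    have h3 : Ad (Zd f₃) x y z a
        = (1 : ℝ) * Ad ρ x y z a + (1 : ℝ) * Ad f₄ x y z a := by
      rw [hZf₃fun]; exact Ad_lin hρ hf₄ 1 1 x y z a
    have e10 := E10 x y z a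
    linarith
  -- final step : [A,Z] applied to V f₂
  intro x y z a
  have hZgfun : Zd (Vd f₂)
      = fun x y z a => ((1:ℝ)/2) * ρ x y z a + (0 : ℝ) * ρ x y z a := by
    funext x y z a; rw [key1 x y z a]; ring
  have hAgfun : Ad (Vd f₂)
      = fun x y z a => (-(1/2) : ℝ) * Zd f₄ x y z a + (0 : ℝ) * Zd f₄ x y z a := by
    funext x y z a; rw [key2 x y z a]; ring
  have h1 : Ad (Zd (Vd f₂)) x y z a
      = Zd (Ad (Vd f₂)) x y z a + Zd (Vd f₂) x y z a := comm_AZ hf₂.Vd x y z a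
  have h2 : Ad (Zd (Vd f₂)) x y z a
      = ((1:ℝ)/2) * Ad ρ x y z a + (0 : ℝ) * Ad ρ x y z a := by
    rw [hZgfun]; exact Ad_lin hρ hρ (1/2) 0 x y z a
  have h3 : Zd (Ad (Vd f₂)) x y z a
      = (-(1/2) : ℝ) * Zd (Zd f₄) x y z a + (0 : ℝ) * Zd (Zd f₄) x y z a := by
    rw [hAgfun]; exact Zd_lin hf₄.Zd hf₄.Zd (-(1/2)) 0 x y z a
  have k1 := key1 x y z a
  have k3 := key3 x y z a
  linarith
end

section
/- Let f₃, f₄ : ℝ⁴ → ℝ be smooth functions of (x, y, z, a) satisfying at every point the two equations ∂/∂z(e^{a}f₃) = e^{−a}·∂/∂a(e^{a}f₄) and ∂/∂z(e^{a}f₄) = −e^{−a}·∂/∂a(e^{a}f₃). If ∂f₄/∂a is a constant C₀ (independent of the point), then C₀ = 0. In particular, every homothetic vector field on ℂH² is a Killing vector field. -/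
open Real

lemma smooth4_diff_z (f : ℝ → ℝ → ℝ → ℝ → ℝ) (hf : Smooth4 f) (x y a : ℝ) :
    Differentiable ℝ (fun t => f x y t a) := by
  have : ContDiff ℝ (⊤ : ℕ∞) (fun t : ℝ => f x y t a) :=
    hf.comp (f := fun t : ℝ => (x, y, t, a)) (ContDiff.prodMk contDiff_const (ContDiff.prodMk contDiff_const (ContDiff.prodMk contDiff_id contDiff_const)))
  exact this.differentiable (by simp)

lemma smooth4_diff_a (f : ℝ → ℝ → ℝ → ℝ → ℝ) (hf : Smooth4 f) (x y z : ℝ) :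
    Differentiable ℝ (fun s => f x y z s) := by
  have : ContDiff ℝ (⊤ : ℕ∞) (fun s : ℝ => f x y z s) :=
    hf.comp (f := fun s : ℝ => (x, y, z, s)) (ContDiff.prodMk contDiff_const (ContDiff.prodMk contDiff_const (ContDiff.prodMk contDiff_const contDiff_id)))
  exact this.differentiable (by simp)

/-- Every homothetic vector field on `ℂH²` is Killing: if smooth `f₃, f₄` satisfy the
coupled equations `∂/∂z(eᵃf₃) = e⁻ᵃ ∂/∂a(eᵃf₄)` and `∂/∂z(eᵃf₄) = −e⁻ᵃ ∂/∂a(eᵃf₃)`,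
and the potential `ρ = ∂f₄/∂a` is a constant `C₀`, then `C₀ = 0`. -/
theorem homothetic_vector_field_on_CH2_is_Killing
    (f₃ f₄ : ℝ → ℝ → ℝ → ℝ → ℝ)
    (hf₃ : Smooth4 f₃) (hf₄ : Smooth4 f₄)
    (h1 : ∀ x y z a : ℝ,
      deriv (fun t => exp a * f₃ x y t a) z
        = exp (-a) * deriv (fun s => exp s * f₄ x y z s) a)
    (h2 : ∀ x y z a : ℝ,
      deriv (fun t => exp a * f₄ x y t a) z
        = -(exp (-a) * deriv (fun s => exp s * f₃ x y z s) a))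
    (C₀ : ℝ)
    (h0 : ∀ x y z a : ℝ, pa f₄ x y z a = C₀) :
    C₀ = 0 := by
  have d3z := smooth4_diff_z f₃ hf₃
  have d3a := smooth4_diff_a f₃ hf₃
  have d4z := smooth4_diff_z f₄ hf₄
  have d4a := smooth4_diff_a f₄ hf₄
  have h0' : ∀ x y z a : ℝ, deriv (fun t => f₄ x y z t) a = C₀ := by
    intro x y z a; have := h0 x y z a; simpa [pa] using this
  -- Step 1 : f₄ is affine in a
  have hlin : ∀ x y z a : ℝ, f₄ x y z a = f₄ x y z 0 + C₀ * a := by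
    intro x y z a
    have hd : Differentiable ℝ (fun s => f₄ x y z s - C₀ * s) :=
      (d4a x y z).sub (differentiable_id.const_mul C₀)
    have hz : ∀ s, deriv (fun s => f₄ x y z s - C₀ * s) s = 0 := by
      intro s
      have hm : (fun s : ℝ => f₄ x y z s - C₀ * s) = fun s => f₄ x y z s - s * C₀ := by
        funext u; ring
      rw [hm, deriv_fun_sub ((d4a x y z) s) ((differentiable_fun_id.mul_const C₀) s), h0' x y z s]
      simp
    have hc := is_const_of_deriv_eq_zero hd hz a 0
    simp at hc
    linarith
  -- z-derivative of f₄ is independent of a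
  have hg : ∀ x y z a : ℝ,
      deriv (fun t => f₄ x y t a) z = deriv (fun t => f₄ x y t 0) z := by
    intro x y z a
    have hfun : (fun t => f₄ x y t a) = fun t => f₄ x y t 0 + C₀ * a :=
      funext fun t => hlin x y t a
    rw [hfun, deriv_add_const]
  -- h1' : e^a ∂_z f₃ = f₄ + C₀
  have h1' : ∀ x y z a : ℝ,
      exp a * deriv (fun t => f₃ x y t a) z = f₄ x y z a + C₀ := by
    intro x y z a
    have e1 : deriv (fun t => exp a * f₃ x y t a) z
        = exp a * deriv (fun t => f₃ x y t a) z :=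
      deriv_const_mul _ ((d3z x y a) z)
    have e2 : deriv (fun s => exp s * f₄ x y z s) a
        = exp a * f₄ x y z a + exp a * C₀ := by
      rw [deriv_fun_mul differentiableAt_exp ((d4a x y z) a), Real.deriv_exp, h0']
    have h := h1 x y z a
    rw [e1, e2, exp_neg] at h
    have hea : exp a ≠ 0 := (exp_pos a).ne'
    field_simp at h
    have h3 : exp a * (exp a * deriv (fun t => f₃ x y t a) z)
        = exp a * (f₄ x y z a + C₀) := by rw [h]
    exact mul_left_cancel₀ hea h3
  -- h2' : ∂_a(e^s f₃) = -e^{2a} g'(z)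
  have h2' : ∀ x y z a : ℝ,
      deriv (fun s => exp s * f₃ x y z s) a
        = -(exp a * exp a * deriv (fun t => f₄ x y t 0) z) := by
    intro x y z a
    have e1 : deriv (fun t => exp a * f₄ x y t a) z
        = exp a * deriv (fun t => f₄ x y t 0) z := by
      rw [deriv_const_mul _ ((d4z x y a) z), hg]
    have h := h2 x y z a
    rw [e1, exp_neg] at h
    have hea : exp a ≠ 0 := (exp_pos a).ne'
    field_simp at h
    nlinarith [h, sq_nonneg (exp a)]
  -- Q is constant in z
  have hQ : ∀ a z : ℝ,
      exp a * f₃ 0 0 z a - f₃ 0 0 z 0 - C₀ * a * z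
        = exp a * f₃ 0 0 0 a - f₃ 0 0 0 0 := by
    intro a z
    have hd : Differentiable ℝ
        (fun t => exp a * f₃ 0 0 t a - f₃ 0 0 t 0 - C₀ * a * t) := by
      exact (((d3z 0 0 a).const_mul _).sub (d3z 0 0 0)).sub
        (differentiable_id.const_mul (C₀ * a))
    have hz : ∀ t, deriv
        (fun t => exp a * f₃ 0 0 t a - f₃ 0 0 t 0 - C₀ * a * t) t = 0 := by
      intro t
      have hm : (fun t : ℝ => exp a * f₃ 0 0 t a - f₃ 0 0 t 0 - C₀ * a * t)
          = fun t => exp a * f₃ 0 0 t a - f₃ 0 0 t 0 - t * (C₀ * a) := by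
        funext u; ring
      rw [hm, deriv_fun_sub (((d3z 0 0 a).const_mul _).fun_sub (d3z 0 0 0) t)
        ((differentiable_fun_id.mul_const _) t),
        deriv_fun_sub (((d3z 0 0 a).const_mul _) t) ((d3z 0 0 0) t),
        deriv_const_mul _ ((d3z 0 0 a) t)]
      have hA := h1' 0 0 t a
      have hB := h1' 0 0 t 0
      rw [exp_zero, one_mul] at hB
      have hl := hlin 0 0 t a
      have hid : deriv (fun u : ℝ => u * (C₀ * a)) t = C₀ * a := by simp
      rw [hid, hA, hB]
      ring_nf
      nlinarith [hl]
    have hc := is_const_of_deriv_eq_zero hd hz z 0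
    simpa using hc
  -- W a := e^a f₃(1,a) - e^a f₃(0,a) equals C₀ a + const
  have hW : (fun s : ℝ => exp s * f₃ 0 0 1 s - exp s * f₃ 0 0 0 s)
      = fun s : ℝ => C₀ * s + (f₃ 0 0 1 0 - f₃ 0 0 0 0) := by
    funext s
    have := hQ s 1
    ring_nf at this ⊢
    linarith
  have hDW : ∀ a : ℝ,
      deriv (fun s : ℝ => exp s * f₃ 0 0 1 s - exp s * f₃ 0 0 0 s) a = C₀ := by
    intro a
    rw [hW]
    have h : (fun s : ℝ => C₀ * s + (f₃ 0 0 1 0 - f₃ 0 0 0 0))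
        = fun s : ℝ => s * C₀ + (f₃ 0 0 1 0 - f₃ 0 0 0 0) := by funext s; ring
    rw [h, deriv_add_const]; simp
  -- Compute the same derivative via h2'
  have hDW2 : ∀ a : ℝ,
      deriv (fun s : ℝ => exp s * f₃ 0 0 1 s - exp s * f₃ 0 0 0 s) a
        = exp a * exp a *
            (deriv (fun t => f₄ 0 0 t 0) 0 - deriv (fun t => f₄ 0 0 t 0) 1) := by
    intro a
    rw [deriv_fun_sub (differentiable_exp.fun_mul (d3a 0 0 1) a)
      (differentiable_exp.fun_mul (d3a 0 0 0) a), h2' 0 0 1 a, h2' 0 0 0 a]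
    ring
  -- Conclude
  have key : ∀ a : ℝ, exp a * exp a *
      (deriv (fun t => f₄ 0 0 t 0) 0 - deriv (fun t => f₄ 0 0 t 0) 1) = C₀ := by
    intro a; rw [← hDW2 a, hDW a]
  have k0 := key 0
  have k1 := key 1
  rw [exp_zero] at k0
  simp only [one_mul] at k0
  rw [k0] at k1
  have hfac : (exp 1 * exp 1 - 1) * C₀ = 0 := by ring_nf; linarith [k1]
  have hne : exp 1 * exp 1 - 1 ≠ 0 := by nlinarith [exp_one_gt_d9]
  exact (mul_eq_zero.mp hfac).resolve_left hne
end

section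
/- Let f₁ : ℝ⁴ → ℝ and C₂ : ℝ² → ℝ be smooth functions of (x, y, z, a) and (x, y) respectively, satisfying at every point of ℝ⁴ the two equations (∂f₁/∂x − (y/2)∂f₁/∂z) = −(1/2)e^{−3a/2}C₂(x, y) and ∂/∂a(e^{a/2}f₁) = −∂C₂/∂x(x, y). Then C₂ is identically zero. -/
open Real

/-- If smooth `f₁ : ℝ⁴ → ℝ` and `C₂ : ℝ² → ℝ` satisfy
`∂f₁/∂x − (y/2)∂f₁/∂z = −(1/2)e^{−3a/2}C₂(x,y)` and
`∂/∂a(e^{a/2}f₁) = −∂C₂/∂x(x,y)` at every point of `ℝ⁴`, then `C₂ ≡ 0`. -/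
theorem coefficient_C2_vanishes
    (f₁ : ℝ → ℝ → ℝ → ℝ → ℝ) (C₂ : ℝ → ℝ → ℝ)
    (hf₁ : Smooth4 f₁)
    (hC₂ : ContDiff ℝ (⊤ : ℕ∞) (fun p : ℝ × ℝ => C₂ p.1 p.2))
    (h1 : ∀ x y z a : ℝ,
      px f₁ x y z a - (y / 2) * pz f₁ x y z a
        = -(1 / 2) * exp (-(3 * a) / 2) * C₂ x y)
    (h2 : ∀ x y z a : ℝ,
      deriv (fun s => exp (s / 2) * f₁ x y z s) a
        = -deriv (fun t => C₂ t y) x) :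
    ∀ x y : ℝ, C₂ x y = 0 := by
  intro x y
  -- differentiability along coordinate lines
  have hline_a : ∀ u v w : ℝ, Differentiable ℝ (fun a => f₁ u v w a) := by
    intro u v w
    have h := hf₁.comp ((ContDiff.prodMk contDiff_const (ContDiff.prodMk contDiff_const
      (ContDiff.prodMk contDiff_const contDiff_id))) :
      ContDiff ℝ (⊤ : ℕ∞) (fun a : ℝ => ((u, v, w, a) : ℝ×ℝ×ℝ×ℝ)))
    exact h.differentiable (by simp)
  have hline_x : ∀ v w b : ℝ, Differentiable ℝ (fun t => f₁ t v w b) := by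
    intro v w b
    have h := hf₁.comp ((ContDiff.prodMk contDiff_id (ContDiff.prodMk contDiff_const
      (ContDiff.prodMk contDiff_const contDiff_const))) :
      ContDiff ℝ (⊤ : ℕ∞) (fun t : ℝ => ((t, v, w, b) : ℝ×ℝ×ℝ×ℝ)))
    exact h.differentiable (by simp)
  have hline_z : ∀ u v b : ℝ, Differentiable ℝ (fun t => f₁ u v t b) := by
    intro u v b
    have h := hf₁.comp ((ContDiff.prodMk contDiff_const (ContDiff.prodMk contDiff_const
      (ContDiff.prodMk contDiff_id contDiff_const))) :
      ContDiff ℝ (⊤ : ℕ∞) (fun t : ℝ => ((u, v, t, b) : ℝ×ℝ×ℝ×ℝ)))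
    exact h.differentiable (by simp)
  -- smoothness of the derivative of C₂ in the first variable
  have hg : ContDiff ℝ ((⊤:ℕ∞):WithTop ℕ∞) (fun t => C₂ t y) :=
    (hC₂.comp (ContDiff.prodMk contDiff_id contDiff_const)).of_le (by simp)
  have hc : ContDiff ℝ ((⊤:ℕ∞):WithTop ℕ∞) (deriv (fun t => C₂ t y)) :=
    (contDiff_infty_iff_deriv.mp hg).2
  have hcdiff : Differentiable ℝ (deriv (fun t => C₂ t y)) :=
    hc.differentiable (by simp)
  -- Step A: integrate h2 in the variable a
  have key : ∀ t w a : ℝ,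
      f₁ t y w a = exp (-(a / 2)) * (f₁ t y w 0 - deriv (fun s => C₂ s y) t * a) := by
    intro t w a
    set c := deriv (fun s => C₂ s y) t with hc_def
    have hF : Differentiable ℝ (fun s => exp (s / 2) * f₁ t y w s) :=
      (Real.differentiable_exp.comp (differentiable_id.div_const 2)).mul (hline_a t y w)
    have hH : ∀ s : ℝ, deriv (fun s => exp (s / 2) * f₁ t y w s + c * s) s = 0 := by
      intro s
      rw [deriv_fun_add (hF s) ((differentiable_fun_id.const_mul c) s), h2 t y w s]
      have : deriv (fun s : ℝ => c * s) s = c := by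
        simpa using ((hasDerivAt_id s).const_mul c).deriv
      rw [this]
      ring
    have hconst := is_const_of_deriv_eq_zero
      (hF.add (differentiable_fun_id.const_mul c)) hH
    have h0 := hconst a 0
    norm_num at h0
    rw [Real.exp_neg]
    have hne : exp (a / 2) ≠ 0 := Real.exp_ne_zero _
    field_simp
    linarith [h0]
  -- Step B: differentiate in x
  have hpx : ∀ w a : ℝ, px f₁ x y w a
      = exp (-(a / 2)) * (px f₁ x y w 0 - deriv (deriv (fun s => C₂ s y)) x * a) := by
    intro w a
    have hfun : (fun u => f₁ u y w a)
        = fun u => exp (-(a / 2)) * (f₁ u y w 0 - deriv (fun s => C₂ s y) u * a) :=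
      funext fun u => key u w a
    have h1d : HasDerivAt (fun u => f₁ u y w 0) (px f₁ x y w 0) x :=
      ((hline_x y w 0) x).hasDerivAt
    have h2d : HasDerivAt (fun u => deriv (fun s => C₂ s y) u * a)
        (deriv (deriv (fun s => C₂ s y)) x * a) x :=
      (hcdiff x).hasDerivAt.mul_const a
    have := ((h1d.sub h2d).const_mul (exp (-(a / 2)))).deriv
    rw [px, hfun]
    exact this
  -- Step C: differentiate in z
  have hpz : ∀ w a : ℝ, pz f₁ x y w a = exp (-(a / 2)) * pz f₁ x y w 0 := by
    intro w a
    have hfun : (fun t => f₁ x y t a)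
        = fun t => exp (-(a / 2)) * (f₁ x y t 0 - deriv (fun s => C₂ s y) x * a) :=
      funext fun t => key x t a
    have h1d : HasDerivAt (fun t => f₁ x y t 0) (pz f₁ x y w 0) w :=
      ((hline_z x y 0) w).hasDerivAt
    have := ((h1d.sub_const (deriv (fun s => C₂ s y) x * a)).const_mul (exp (-(a / 2)))).deriv
    rw [pz, hfun]
    exact this
  -- main identity: a linear function of a equals an exponential
  have main : ∀ a : ℝ,
      (px f₁ x y 0 0 - y / 2 * pz f₁ x y 0 0)
        - deriv (deriv (fun s => C₂ s y)) x * a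
        = -(1 / 2) * exp (-a) * C₂ x y := by
    intro a
    have h := h1 x y 0 a
    rw [hpx 0 a, hpz 0 a] at h
    have hexp : exp (-(3 * a) / 2) = exp (-(a / 2)) * exp (-a) := by
      rw [← Real.exp_add]; ring_nf
    rw [hexp] at h
    apply mul_left_cancel₀ (Real.exp_ne_zero (-(a / 2)))
    linear_combination h
  have e0 := main 0
  have eL := main (Real.log 2)
  have eL' := main (-(Real.log 2))
  rw [Real.exp_neg, Real.exp_log (by norm_num : (0:ℝ) < 2)] at eL
  rw [neg_neg, Real.exp_log (by norm_num : (0:ℝ) < 2)] at eL'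
  simp only [neg_zero, Real.exp_zero, mul_zero, sub_zero] at e0
  nlinarith [eL, eL', e0]
end

section
/- Let f₃, f₄ : ℝ⁴ → ℝ be smooth functions of (x, y, z, a) satisfying at every point the equations ∂/∂z(e^{a}f₃) = e^{−a}·∂/∂a(e^{a}f₄) and ∂/∂z(e^{a}f₄) = −e^{−a}·∂/∂a(e^{a}f₃). Define F₃(x, y, z, w) = w·f₃(x, y, z, log w) and F₄(x, y, z, w) = w·f₄(x, y, z, log w) for w > 0. Then for each fixed (x, y), the functions (z, w) ↦ F₃(x, y, z, w) and (z, w) ↦ F₄(x, y, z, w) are harmonic on the half-plane ℝ × (0, ∞): ∂²F₃/∂z² + ∂²F₃/∂w² = 0 and ∂²F₄/∂z² + ∂²F₄/∂w² = 0. -/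
open Real

private lemma sliceD1 {E : Type*} [NormedAddCommGroup E] [NormedSpace ℝ E]
    {F : ℝ × ℝ → E} (hF : Differentiable ℝ F) (z a : ℝ) :
    HasDerivAt (fun t => F (t, a)) (fderiv ℝ F (z, a) (1, 0)) z :=
  (hF (z, a)).hasFDerivAt.comp_hasDerivAt z
    ((hasDerivAt_id z).prodMk (hasDerivAt_const z a))

private lemma sliceD2 {E : Type*} [NormedAddCommGroup E] [NormedSpace ℝ E]
    {F : ℝ × ℝ → E} (hF : Differentiable ℝ F) (z a : ℝ) :
    HasDerivAt (fun s => F (z, s)) (fderiv ℝ F (z, a) (0, 1)) a :=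
  (hF (z, a)).hasFDerivAt.comp_hasDerivAt a
    ((hasDerivAt_const a z).prodMk (hasDerivAt_id a))

private lemma key (G H : ℝ × ℝ → ℝ)
    (hG : ContDiff ℝ (⊤ : ℕ∞) G) (hH : ContDiff ℝ (⊤ : ℕ∞) H)
    (e1 : ∀ z a : ℝ, fderiv ℝ G (z, a) (1, 0) = exp (-a) * fderiv ℝ H (z, a) (0, 1))
    (e2 : ∀ z a : ℝ, fderiv ℝ G (z, a) (0, 1) = -(exp a * fderiv ℝ H (z, a) (1, 0)))
    (z w : ℝ) (hw : 0 < w) :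
    deriv (fun t => deriv (fun s => G (s, Real.log w)) t) z
      + deriv (fun t => deriv (fun s => G (z, Real.log s)) t) w = 0 := by
  set l := Real.log w with hl
  have hwe : exp l = w := Real.exp_log hw
  have hGd : Differentiable ℝ G := hG.differentiable (by simp)
  have hHd : Differentiable ℝ H := hH.differentiable (by simp)
  have hH' : ContDiff ℝ (⊤ : ℕ∞) (fderiv ℝ H) := hH.fderiv_right (by simp)
  have hH'd : Differentiable ℝ (fderiv ℝ H) := hH'.differentiable (by simp)
  have symm : fderiv ℝ (fderiv ℝ H) (z, l) (1, 0) (0, 1)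
      = fderiv ℝ (fderiv ℝ H) (z, l) (0, 1) (1, 0) :=
    second_derivative_symmetric (fun y => (hHd y).hasFDerivAt)
      ((hH'd (z, l)).hasFDerivAt) _ _
  have evD1 : ∀ (v : ℝ × ℝ) (z₀ a₀ : ℝ), HasDerivAt (fun t => fderiv ℝ H (t, a₀) v)
      (fderiv ℝ (fderiv ℝ H) (z₀, a₀) (1, 0) v) z₀ := fun v z₀ a₀ =>
    (ContinuousLinearMap.apply ℝ ℝ v).hasFDerivAt.comp_hasDerivAt z₀ (sliceD1 hH'd z₀ a₀)
  have evD2 : ∀ (v : ℝ × ℝ) (z₀ a₀ : ℝ), HasDerivAt (fun s => fderiv ℝ H (z₀, s) v)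
      (fderiv ℝ (fderiv ℝ H) (z₀, a₀) (0, 1) v) a₀ := fun v z₀ a₀ =>
    (ContinuousLinearMap.apply ℝ ℝ v).hasFDerivAt.comp_hasDerivAt a₀ (sliceD2 hH'd z₀ a₀)
  have innerA : ∀ t : ℝ, deriv (fun s => G (s, l)) t
      = exp (-l) * fderiv ℝ H (t, l) (0, 1) := fun t => by
    rw [(sliceD1 hGd t l).deriv, e1]
  have A : deriv (fun t => deriv (fun s => G (s, l)) t) z
      = exp (-l) * fderiv ℝ (fderiv ℝ H) (z, l) (1, 0) (0, 1) := by
    have hfe : (fun t => deriv (fun s => G (s, l)) t)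
        = fun t => exp (-l) * fderiv ℝ H (t, l) (0, 1) := funext innerA
    rw [hfe, ((evD1 (0, 1) z l).const_mul (exp (-l))).deriv]
  have innerB : ∀ t ∈ Set.Ioi (0 : ℝ), deriv (fun s => G (z, Real.log s)) t
      = -(fderiv ℝ H (z, Real.log t) (1, 0)) := by
    intro t ht
    have ht' : (0 : ℝ) < t := ht
    have hc : HasDerivAt (fun s => G (z, Real.log s))
        (fderiv ℝ G (z, Real.log t) (0, 1) * t⁻¹) t :=
      (sliceD2 hGd z (Real.log t)).comp t (Real.hasDerivAt_log ht'.ne')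
    rw [hc.deriv, e2, Real.exp_log ht']
    field_simp
  have B : deriv (fun t => deriv (fun s => G (z, Real.log s)) t) w
      = -(fderiv ℝ (fderiv ℝ H) (z, l) (0, 1) (1, 0) * w⁻¹) := by
    have heq : (fun t => deriv (fun s => G (z, Real.log s)) t)
        =ᶠ[nhds w] fun t => -(fderiv ℝ H (z, Real.log t) (1, 0)) := by
      filter_upwards [Ioi_mem_nhds hw] with t ht using innerB t ht
    rw [heq.deriv_eq]
    have hc : HasDerivAt (fun t => fderiv ℝ H (z, Real.log t) (1, 0))
        (fderiv ℝ (fderiv ℝ H) (z, l) (0, 1) (1, 0) * w⁻¹) w :=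
      HasDerivAt.comp (h₂ := fun s => fderiv ℝ H (z, s) (1, 0)) (h := Real.log) w
        (evD2 (1, 0) z l) (Real.hasDerivAt_log hw.ne')
    exact hc.neg.deriv
  rw [A, B, symm, Real.exp_neg, hwe]
  ring

/-- If smooth `f₃, f₄` satisfy `∂/∂z(eᵃf₃) = e⁻ᵃ ∂/∂a(eᵃf₄)` and
`∂/∂z(eᵃf₄) = −e⁻ᵃ ∂/∂a(eᵃf₃)`, then for each fixed `(x,y)` the functions
`F₃(z,w) = w·f₃(x,y,z,log w)` and `F₄(z,w) = w·f₄(x,y,z,log w)` are harmonic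
on the half-plane `{w > 0}`. -/
theorem F3_F4_harmonic_on_half_plane
    (f₃ f₄ : ℝ → ℝ → ℝ → ℝ → ℝ)
    (hf₃ : Smooth4 f₃) (hf₄ : Smooth4 f₄)
    (h1 : ∀ x y z a : ℝ,
      deriv (fun t => exp a * f₃ x y t a) z
        = exp (-a) * deriv (fun s => exp s * f₄ x y z s) a)
    (h2 : ∀ x y z a : ℝ,
      deriv (fun t => exp a * f₄ x y t a) z
        = -(exp (-a) * deriv (fun s => exp s * f₃ x y z s) a)) :
    ∀ x y z w : ℝ, 0 < w →
      (deriv (fun t => deriv (fun s => w * f₃ x y s (Real.log w)) t) z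
          + deriv (fun t => deriv (fun s => s * f₃ x y z (Real.log s)) t) w = 0 ∧
       deriv (fun t => deriv (fun s => w * f₄ x y s (Real.log w)) t) z
          + deriv (fun t => deriv (fun s => s * f₄ x y z (Real.log s)) t) w = 0) := by
  intro x y z w hw
  set G₃ : ℝ × ℝ → ℝ := fun p => exp p.2 * f₃ x y p.1 p.2 with hG₃def
  set G₄ : ℝ × ℝ → ℝ := fun p => exp p.2 * f₄ x y p.1 p.2 with hG₄def
  have hproj : ContDiff ℝ (⊤ : ℕ∞) (fun p : ℝ × ℝ => ((x, y, p.1, p.2) : ℝ × ℝ × ℝ × ℝ)) :=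
    contDiff_const.prodMk (contDiff_const.prodMk (contDiff_fst.prodMk contDiff_snd))
  have hG₃ : ContDiff ℝ (⊤ : ℕ∞) G₃ :=
    (Real.contDiff_exp.comp contDiff_snd).mul (hf₃.comp hproj)
  have hG₄ : ContDiff ℝ (⊤ : ℕ∞) G₄ :=
    (Real.contDiff_exp.comp contDiff_snd).mul (hf₄.comp hproj)
  have hG₃d : Differentiable ℝ G₃ := hG₃.differentiable (by simp)
  have hG₄d : Differentiable ℝ G₄ := hG₄.differentiable (by simp)
  -- translate hypotheses to fderiv statements
  have h1' : ∀ z a : ℝ, fderiv ℝ G₃ (z, a) (1, 0) = exp (-a) * fderiv ℝ G₄ (z, a) (0, 1) := by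
    intro z a
    have l1 : deriv (fun t => exp a * f₃ x y t a) z = fderiv ℝ G₃ (z, a) (1, 0) :=
      (sliceD1 hG₃d z a).deriv
    have l2 : deriv (fun s => exp s * f₄ x y z s) a = fderiv ℝ G₄ (z, a) (0, 1) :=
      (sliceD2 hG₄d z a).deriv
    rw [← l1, ← l2]; exact h1 x y z a
  have h2' : ∀ z a : ℝ, fderiv ℝ G₄ (z, a) (1, 0)
      = -(exp (-a) * fderiv ℝ G₃ (z, a) (0, 1)) := by
    intro z a
    have l1 : deriv (fun t => exp a * f₄ x y t a) z = fderiv ℝ G₄ (z, a) (1, 0) :=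
      (sliceD1 hG₄d z a).deriv
    have l2 : deriv (fun s => exp s * f₃ x y z s) a = fderiv ℝ G₃ (z, a) (0, 1) :=
      (sliceD2 hG₃d z a).deriv
    rw [← l1, ← l2]; exact h2 x y z a
  have hexp : ∀ a : ℝ, exp a * exp (-a) = 1 := fun a => by
    rw [← Real.exp_add]; simp
  have e2 : ∀ z a : ℝ, fderiv ℝ G₃ (z, a) (0, 1) = -(exp a * fderiv ℝ G₄ (z, a) (1, 0)) := by
    intro z a
    rw [h2' z a]
    have := hexp a
    have h := Real.exp_ne_zero a
    field_simp [Real.exp_neg]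
    rw [mul_assoc, hexp, mul_one]
  have e4 : ∀ z a : ℝ, fderiv ℝ G₄ (z, a) (0, 1) = exp a * fderiv ℝ G₃ (z, a) (1, 0) := by
    intro z a
    rw [h1' z a]
    have h := Real.exp_ne_zero a
    field_simp [Real.exp_neg]
    rw [mul_assoc, hexp, mul_one]
  constructor
  · -- F₃ harmonic : apply key with G = G₃, H = G₄
    have hfun1 : (fun s => w * f₃ x y s (Real.log w)) = fun s => G₃ (s, Real.log w) := by
      funext s; simp [hG₃def, Real.exp_log hw]
    have hfun2 : deriv (fun t => deriv (fun s => s * f₃ x y z (Real.log s)) t) w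
        = deriv (fun t => deriv (fun s => G₃ (z, Real.log s)) t) w := by
      apply Filter.EventuallyEq.deriv_eq
      filter_upwards [Ioi_mem_nhds hw] with t ht
      apply Filter.EventuallyEq.deriv_eq
      filter_upwards [Ioi_mem_nhds (Set.mem_Ioi.mp ht)] with s hs
      simp [hG₃def, Real.exp_log (Set.mem_Ioi.mp hs)]
    rw [hfun1, hfun2]
    exact key G₃ G₄ hG₃ hG₄ h1' e2 z w hw
  · -- F₄ harmonic : apply key with G = G₄, H = -G₃
    have hnegd : ∀ (p : ℝ × ℝ) (v : ℝ × ℝ),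
        fderiv ℝ (fun q => -G₃ q) p v = -(fderiv ℝ G₃ p v) := by
      intro p v; rw [fderiv_fun_neg]; simp
    have e1' : ∀ z a : ℝ, fderiv ℝ G₄ (z, a) (1, 0)
        = exp (-a) * fderiv ℝ (fun q => -G₃ q) (z, a) (0, 1) := by
      intro z a; rw [hnegd, h2' z a]; ring
    have e2' : ∀ z a : ℝ, fderiv ℝ G₄ (z, a) (0, 1)
        = -(exp a * fderiv ℝ (fun q => -G₃ q) (z, a) (1, 0)) := by
      intro z a; rw [hnegd, e4 z a]; ring
    have hfun1 : (fun s => w * f₄ x y s (Real.log w)) = fun s => G₄ (s, Real.log w) := by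
      funext s; simp [hG₄def, Real.exp_log hw]
    have hfun2 : deriv (fun t => deriv (fun s => s * f₄ x y z (Real.log s)) t) w
        = deriv (fun t => deriv (fun s => G₄ (z, Real.log s)) t) w := by
      apply Filter.EventuallyEq.deriv_eq
      filter_upwards [Ioi_mem_nhds hw] with t ht
      apply Filter.EventuallyEq.deriv_eq
      filter_upwards [Ioi_mem_nhds (Set.mem_Ioi.mp ht)] with s hs
      simp [hG₄def, Real.exp_log (Set.mem_Ioi.mp hs)]
    rw [hfun1, hfun2]
    exact key G₄ (fun q => -G₃ q) hG₄ hG₃.neg e1' e2' z w hw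
end

section
/- Suppose smooth functions f₁, f₂, f₃, f₄, ρ : ℝ⁴ → ℝ satisfy the conformal system on ℂH². Then there exist smooth functions α, β : ℝ² → ℝ such that f₄(x, y, z, a) = α(x, y) + z·β(x, y) for all (x, y, z, a) ∈ ℝ⁴; in particular, f₄ is independent of the variable a and is an affine function of the variable z. -/
open Real

namespace CH2aux

abbrev E4 := ℝ × ℝ × ℝ × ℝ

def unc (f : ℝ → ℝ → ℝ → ℝ → ℝ) : E4 → ℝ := fun p => f p.1 p.2.1 p.2.2.1 p.2.2.2

def e1 : E4 := (1, 0, 0, 0)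
def e2 : E4 := (0, 1, 0, 0)
def e3 : E4 := (0, 0, 1, 0)
def e4 : E4 := (0, 0, 0, 1)

/-- directional derivative as a 4-variable function -/
noncomputable def PD (v : E4) (f : ℝ → ℝ → ℝ → ℝ → ℝ) : ℝ → ℝ → ℝ → ℝ → ℝ :=
  fun x y z a => fderiv ℝ (unc f) (x, y, z, a) v

lemma fderiv_smooth {f} (hf : Smooth4 f) :
    ContDiff ℝ (⊤ : ℕ∞) (fun p : E4 => fderiv ℝ (unc f) p) :=
  hf.fderiv_right (le_refl _)

lemma PD_smooth {f} (hf : Smooth4 f) (v : E4) : Smooth4 (PD v f) :=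
  ((fderiv_smooth hf).clm_apply contDiff_const : )

-- the four curves
lemma hasDerivAt_curve1 (x y z a : ℝ) :
    HasDerivAt (fun t : ℝ => ((t, y, z, a) : E4)) e1 x :=
  ((hasDerivAt_id x).prodMk ((hasDerivAt_const x _)))
lemma hasDerivAt_curve2 (x y z a : ℝ) :
    HasDerivAt (fun t : ℝ => ((x, t, z, a) : E4)) e2 y :=
  ((hasDerivAt_const y _).prodMk ((hasDerivAt_id y).prodMk (hasDerivAt_const y _)))
lemma hasDerivAt_curve3 (x y z a : ℝ) :
    HasDerivAt (fun t : ℝ => ((x, y, t, a) : E4)) e3 z :=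
  ((hasDerivAt_const z _).prodMk ((hasDerivAt_const z _).prodMk
    ((hasDerivAt_id z).prodMk (hasDerivAt_const z _))))
lemma hasDerivAt_curve4 (x y z a : ℝ) :
    HasDerivAt (fun t : ℝ => ((x, y, z, t) : E4)) e4 a :=
  ((hasDerivAt_const a _).prodMk ((hasDerivAt_const a _).prodMk
    ((hasDerivAt_const a _).prodMk (hasDerivAt_id a))))

lemma hasDerivAt_px {f} (hf : Smooth4 f) (x y z a : ℝ) :
    HasDerivAt (fun t => f t y z a) (PD e1 f x y z a) x :=
  ((hf.differentiable (by simp : ((⊤ : ℕ∞) : WithTop ℕ∞) ≠ 0) (x, y, z, a)).hasFDerivAt.comp_hasDerivAt x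
    (hasDerivAt_curve1 x y z a) : HasDerivAt (unc f ∘ fun t : ℝ => ((t, y, z, a) : E4)) _ x)
lemma hasDerivAt_py {f} (hf : Smooth4 f) (x y z a : ℝ) :
    HasDerivAt (fun t => f x t z a) (PD e2 f x y z a) y :=
  ((hf.differentiable (by simp : ((⊤ : ℕ∞) : WithTop ℕ∞) ≠ 0) (x, y, z, a)).hasFDerivAt.comp_hasDerivAt y
    (hasDerivAt_curve2 x y z a) : HasDerivAt (unc f ∘ fun t : ℝ => ((x, t, z, a) : E4)) _ y)
lemma hasDerivAt_pz {f} (hf : Smooth4 f) (x y z a : ℝ) :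
    HasDerivAt (fun t => f x y t a) (PD e3 f x y z a) z :=
  ((hf.differentiable (by simp : ((⊤ : ℕ∞) : WithTop ℕ∞) ≠ 0) (x, y, z, a)).hasFDerivAt.comp_hasDerivAt z
    (hasDerivAt_curve3 x y z a) : HasDerivAt (unc f ∘ fun t : ℝ => ((x, y, t, a) : E4)) _ z)
lemma hasDerivAt_pa {f} (hf : Smooth4 f) (x y z a : ℝ) :
    HasDerivAt (fun t => f x y z t) (PD e4 f x y z a) a :=
  ((hf.differentiable (by simp : ((⊤ : ℕ∞) : WithTop ℕ∞) ≠ 0) (x, y, z, a)).hasFDerivAt.comp_hasDerivAt a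
    (hasDerivAt_curve4 x y z a) : HasDerivAt (unc f ∘ fun t : ℝ => ((x, y, z, t) : E4)) _ a)

lemma px_eq_PD {f} (hf : Smooth4 f) : px f = PD e1 f := by
  funext x y z a; exact (hasDerivAt_px hf x y z a).deriv
lemma py_eq_PD {f} (hf : Smooth4 f) : py f = PD e2 f := by
  funext x y z a; exact (hasDerivAt_py hf x y z a).deriv
lemma pz_eq_PD {f} (hf : Smooth4 f) : pz f = PD e3 f := by
  funext x y z a; exact (hasDerivAt_pz hf x y z a).deriv
lemma pa_eq_PD {f} (hf : Smooth4 f) : pa f = PD e4 f := by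
  funext x y z a; exact (hasDerivAt_pa hf x y z a).deriv

lemma PD_comm {f} (hf : Smooth4 f) (v w : E4) (x y z a : ℝ) :
    PD v (PD w f) x y z a = PD w (PD v f) x y z a := by
  have hdiff : ∀ p : E4, HasFDerivAt (unc f) (fderiv ℝ (unc f) p) p :=
    fun p => (hf.differentiable (by simp) p).hasFDerivAt
  have h2 : HasFDerivAt (fun p => fderiv ℝ (unc f) p)
      (fderiv ℝ (fun p => fderiv ℝ (unc f) p) (x, y, z, a)) (x, y, z, a) :=
    (((fderiv_smooth hf).differentiable (by simp)) (x, y, z, a)).hasFDerivAt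
  have hsymm := second_derivative_symmetric hdiff h2 v w
  have key : ∀ v₀ w₀ : E4, PD v₀ (PD w₀ f) x y z a
      = (fderiv ℝ (fun p => fderiv ℝ (unc f) p) (x, y, z, a) v₀) w₀ := by
    intro v₀ w₀
    have h3 : HasFDerivAt (fun p : E4 => fderiv ℝ (unc f) p w₀)
        ((ContinuousLinearMap.apply ℝ ℝ w₀).comp
          (fderiv ℝ (fun p => fderiv ℝ (unc f) p) (x, y, z, a))) (x, y, z, a) :=
      (ContinuousLinearMap.apply ℝ ℝ w₀).hasFDerivAt.comp _ h2
    show fderiv ℝ (fun p => fderiv ℝ (unc f) p w₀) (x, y, z, a) v₀ = _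
    rw [h3.fderiv]
    rfl
  rw [key v w, key w v]
  exact hsymm

lemma PD_comm' {f} (hf : Smooth4 f) (v w : E4) :
    PD v (PD w f) = PD w (PD v f) := by
  funext x y z a; exact PD_comm hf v w x y z a

lemma deriv_eq_of_eq {L R : ℝ → ℝ} {dL dR t : ℝ} (h : ∀ s, L s = R s)
    (hL : HasDerivAt L dL t) (hR : HasDerivAt R dR t) : dL = dR := by
  have h' : HasDerivAt L dR t := by rw [show L = R from funext h]; exact hR
  exact hL.unique h'

lemma cancel_exp {c X : ℝ} (h : Real.exp c * X = 0) : X = 0 := by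
  rcases mul_eq_zero.mp h with h' | h'
  · exact absurd h' (Real.exp_ne_zero c)
  · exact h'

end CH2aux

/-- If smooth `f₁, f₂, f₃, f₄, ρ` satisfy the conformal system on `ℂH²`, then the
component `f₄` is independent of `a` and affine in `z`:
`f₄(x,y,z,a) = α(x,y) + z·β(x,y)` for smooth functions `α, β`. -/
theorem f4_is_affine_in_z_and_independent_of_a
    (f₁ f₂ f₃ f₄ ρ : ℝ → ℝ → ℝ → ℝ → ℝ)
    (hf₁ : Smooth4 f₁) (hf₂ : Smooth4 f₂) (hf₃ : Smooth4 f₃) (hf₄ : Smooth4 f₄)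
    (hρ : Smooth4 ρ)
    (hsys : ConformalSystemCH2 f₁ f₂ f₃ f₄ ρ) :
    ∃ α β : ℝ → ℝ → ℝ,
      ContDiff ℝ (⊤ : ℕ∞) (fun p : ℝ × ℝ => α p.1 p.2) ∧
      ContDiff ℝ (⊤ : ℕ∞) (fun p : ℝ × ℝ => β p.1 p.2) ∧
      ∀ x y z a : ℝ, f₄ x y z a = α x y + z * β x y := by
  classical
  open CH2aux in
  · have hS : ∀ x y z a : ℝ,
      2 * exp (a / 2) * (px f₁ x y z a - (y / 2) * pz f₁ x y z a) - f₄ x y z a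
          = 2 * ρ x y z a ∧
      exp (a / 2) * (py f₁ x y z a + (x / 2) * pz f₁ x y z a)
          + exp (a / 2) * (px f₂ x y z a - (y / 2) * pz f₂ x y z a) = 0 ∧
      2 * exp (a / 2) * (py f₂ x y z a + (x / 2) * pz f₂ x y z a) - f₄ x y z a
          = 2 * ρ x y z a ∧
      exp a * pz f₁ x y z a
          + exp (a / 2) * (px f₃ x y z a - (y / 2) * pz f₃ x y z a) + f₂ x y z a = 0 ∧
      exp a * pz f₂ x y z a
          + exp (a / 2) * (py f₃ x y z a + (x / 2) * pz f₃ x y z a) - f₁ x y z a = 0 ∧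
      exp a * pz f₃ x y z a - f₄ x y z a = ρ x y z a ∧
      pa f₁ x y z a
          + exp (a / 2) * (px f₄ x y z a - (y / 2) * pz f₄ x y z a) + f₁ x y z a / 2 = 0 ∧
      pa f₂ x y z a
          + exp (a / 2) * (py f₄ x y z a + (x / 2) * pz f₄ x y z a) + f₂ x y z a / 2 = 0 ∧
      pa f₃ x y z a + exp a * pz f₄ x y z a + f₃ x y z a = 0 ∧
      pa f₄ x y z a = ρ x y z a := hsys
    clear hsys
    have q1 : ∀ x y z a : ℝ, 2 * exp (a / 2) * (PD e1 f₁ x y z a - y / 2 * PD e3 f₁ x y z a)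
        - f₄ x y z a = 2 * ρ x y z a := by
      intro x y z a; have h := (hS x y z a).1
      rwa [px_eq_PD hf₁, pz_eq_PD hf₁] at h
    have q3 : ∀ x y z a : ℝ, 2 * exp (a / 2) * (PD e2 f₂ x y z a + x / 2 * PD e3 f₂ x y z a)
        - f₄ x y z a = 2 * ρ x y z a := by
      intro x y z a; have h := (hS x y z a).2.2.1
      rwa [py_eq_PD hf₂, pz_eq_PD hf₂] at h
    have q4 : ∀ x y z a : ℝ, exp a * PD e3 f₁ x y z a
        + exp (a / 2) * (PD e1 f₃ x y z a - y / 2 * PD e3 f₃ x y z a) + f₂ x y z a = 0 := by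
      intro x y z a; have h := (hS x y z a).2.2.2.1
      rwa [pz_eq_PD hf₁, px_eq_PD hf₃, pz_eq_PD hf₃] at h
    have q5 : ∀ x y z a : ℝ, exp a * PD e3 f₂ x y z a
        + exp (a / 2) * (PD e2 f₃ x y z a + x / 2 * PD e3 f₃ x y z a) - f₁ x y z a = 0 := by
      intro x y z a; have h := (hS x y z a).2.2.2.2.1
      rwa [pz_eq_PD hf₂, py_eq_PD hf₃, pz_eq_PD hf₃] at h
    have q6 : ∀ x y z a : ℝ, exp a * PD e3 f₃ x y z a - f₄ x y z a = ρ x y z a := by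
      intro x y z a; have h := (hS x y z a).2.2.2.2.2.1
      rwa [pz_eq_PD hf₃] at h
    have q7 : ∀ x y z a : ℝ, PD e4 f₁ x y z a
        + exp (a / 2) * (PD e1 f₄ x y z a - y / 2 * PD e3 f₄ x y z a) + f₁ x y z a / 2 = 0 := by
      intro x y z a; have h := (hS x y z a).2.2.2.2.2.2.1
      rwa [pa_eq_PD hf₁, px_eq_PD hf₄, pz_eq_PD hf₄] at h
    have q8 : ∀ x y z a : ℝ, PD e4 f₂ x y z a
        + exp (a / 2) * (PD e2 f₄ x y z a + x / 2 * PD e3 f₄ x y z a) + f₂ x y z a / 2 = 0 := by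
      intro x y z a; have h := (hS x y z a).2.2.2.2.2.2.2.1
      rwa [pa_eq_PD hf₂, py_eq_PD hf₄, pz_eq_PD hf₄] at h
    have q9 : ∀ x y z a : ℝ, PD e4 f₃ x y z a + exp a * PD e3 f₄ x y z a + f₃ x y z a = 0 := by
      intro x y z a; have h := (hS x y z a).2.2.2.2.2.2.2.2.1
      rwa [pa_eq_PD hf₃, pz_eq_PD hf₄] at h
    have q10 : ∀ x y z a : ℝ, PD e4 f₄ x y z a = ρ x y z a := by
      intro x y z a; have h := (hS x y z a).2.2.2.2.2.2.2.2.2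
      rwa [pa_eq_PD hf₄] at h
    -- second–order substitution identities (derivatives of (vii),(viii),(ix),(x))
    have hv1 : ∀ x y z a : ℝ, PD e1 (PD e4 f₁) x y z a
        + exp (a / 2) * (PD e1 (PD e1 f₄) x y z a - y / 2 * PD e1 (PD e3 f₄) x y z a)
        + PD e1 f₁ x y z a / 2 = 0 := by
      intro x y z a
      exact deriv_eq_of_eq (fun t => q7 t y z a)
        (((hasDerivAt_px (PD_smooth hf₁ e4) x y z a).add
          (((hasDerivAt_px (PD_smooth hf₄ e1) x y z a).sub
            ((hasDerivAt_px (PD_smooth hf₄ e3) x y z a).const_mul (y / 2))).const_mul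
              (exp (a / 2)))).add
          ((hasDerivAt_px hf₁ x y z a).div_const 2))
        (hasDerivAt_const x 0)
    have hv3 : ∀ x y z a : ℝ, PD e3 (PD e4 f₁) x y z a
        + exp (a / 2) * (PD e1 (PD e3 f₄) x y z a - y / 2 * PD e3 (PD e3 f₄) x y z a)
        + PD e3 f₁ x y z a / 2 = 0 := by
      intro x y z a
      have h := deriv_eq_of_eq (fun t => q7 x y t a)
        (((hasDerivAt_pz (PD_smooth hf₁ e4) x y z a).add
          (((hasDerivAt_pz (PD_smooth hf₄ e1) x y z a).sub
            ((hasDerivAt_pz (PD_smooth hf₄ e3) x y z a).const_mul (y / 2))).const_mul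
              (exp (a / 2)))).add
          ((hasDerivAt_pz hf₁ x y z a).div_const 2))
        (hasDerivAt_const z 0)
      rwa [PD_comm' hf₄ e3 e1] at h
    have hw2 : ∀ x y z a : ℝ, PD e2 (PD e4 f₂) x y z a
        + exp (a / 2) * (PD e2 (PD e2 f₄) x y z a + x / 2 * PD e2 (PD e3 f₄) x y z a)
        + PD e2 f₂ x y z a / 2 = 0 := by
      intro x y z a
      exact deriv_eq_of_eq (fun t => q8 x t z a)
        (((hasDerivAt_py (PD_smooth hf₂ e4) x y z a).add
          (((hasDerivAt_py (PD_smooth hf₄ e2) x y z a).add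
            ((hasDerivAt_py (PD_smooth hf₄ e3) x y z a).const_mul (x / 2))).const_mul
              (exp (a / 2)))).add
          ((hasDerivAt_py hf₂ x y z a).div_const 2))
        (hasDerivAt_const y 0)
    have hw3 : ∀ x y z a : ℝ, PD e3 (PD e4 f₂) x y z a
        + exp (a / 2) * (PD e2 (PD e3 f₄) x y z a + x / 2 * PD e3 (PD e3 f₄) x y z a)
        + PD e3 f₂ x y z a / 2 = 0 := by
      intro x y z a
      have h := deriv_eq_of_eq (fun t => q8 x y t a)
        (((hasDerivAt_pz (PD_smooth hf₂ e4) x y z a).add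
          (((hasDerivAt_pz (PD_smooth hf₄ e2) x y z a).add
            ((hasDerivAt_pz (PD_smooth hf₄ e3) x y z a).const_mul (x / 2))).const_mul
              (exp (a / 2)))).add
          ((hasDerivAt_pz hf₂ x y z a).div_const 2))
        (hasDerivAt_const z 0)
      rwa [PD_comm' hf₄ e3 e2] at h
    have hx1 : ∀ x y z a : ℝ, PD e1 (PD e4 f₃) x y z a
        + exp a * PD e1 (PD e3 f₄) x y z a + PD e1 f₃ x y z a = 0 := by
      intro x y z a
      exact deriv_eq_of_eq (fun t => q9 t y z a)
        (((hasDerivAt_px (PD_smooth hf₃ e4) x y z a).add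
          ((hasDerivAt_px (PD_smooth hf₄ e3) x y z a).const_mul (exp a))).add
          (hasDerivAt_px hf₃ x y z a))
        (hasDerivAt_const x 0)
    have hx2 : ∀ x y z a : ℝ, PD e2 (PD e4 f₃) x y z a
        + exp a * PD e2 (PD e3 f₄) x y z a + PD e2 f₃ x y z a = 0 := by
      intro x y z a
      exact deriv_eq_of_eq (fun t => q9 x t z a)
        (((hasDerivAt_py (PD_smooth hf₃ e4) x y z a).add
          ((hasDerivAt_py (PD_smooth hf₄ e3) x y z a).const_mul (exp a))).add
          (hasDerivAt_py hf₃ x y z a))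
        (hasDerivAt_const y 0)
    have hx3 : ∀ x y z a : ℝ, PD e3 (PD e4 f₃) x y z a
        + exp a * PD e3 (PD e3 f₄) x y z a + PD e3 f₃ x y z a = 0 := by
      intro x y z a
      exact deriv_eq_of_eq (fun t => q9 x y t a)
        (((hasDerivAt_pz (PD_smooth hf₃ e4) x y z a).add
          ((hasDerivAt_pz (PD_smooth hf₄ e3) x y z a).const_mul (exp a))).add
          (hasDerivAt_pz hf₃ x y z a))
        (hasDerivAt_const z 0)
    have hra : ∀ x y z a : ℝ, PD e4 ρ x y z a = PD e4 (PD e4 f₄) x y z a := by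
      intro x y z a
      exact (deriv_eq_of_eq (fun t => q10 x y z t)
        (hasDerivAt_pa (PD_smooth hf₄ e4) x y z a) (hasDerivAt_pa hρ x y z a)).symm
    -- equation (A): 2 e^a Q1 + u_a + 2 u_aa = 0
    have hA : ∀ x y z a : ℝ,
        2 * (exp (a / 2) * exp (a / 2)) * (PD e1 (PD e1 f₄) x y z a
          - y * PD e1 (PD e3 f₄) x y z a + y ^ 2 / 4 * PD e3 (PD e3 f₄) x y z a)
        + PD e4 f₄ x y z a + 2 * PD e4 (PD e4 f₄) x y z a = 0 := by
      intro x y z a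
      have hEh : HasDerivAt (fun t : ℝ => exp (t / 2)) (exp (a / 2) * (1 / 2)) a :=
        ((hasDerivAt_id' a).div_const 2).exp
      have d := deriv_eq_of_eq (fun t => q1 x y z t)
        ((((hEh.const_mul 2).mul
          ((hasDerivAt_pa (PD_smooth hf₁ e1) x y z a).sub
            ((hasDerivAt_pa (PD_smooth hf₁ e3) x y z a).const_mul (y / 2)))).sub
          (hasDerivAt_pa hf₄ x y z a)))
        ((hasDerivAt_pa hρ x y z a).const_mul 2)
      rw [PD_comm' hf₁ e4 e1, PD_comm' hf₁ e4 e3] at d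
      have h1 := hv1 x y z a
      have h3 := hv3 x y z a
      have hr := hra x y z a
      simp only [Pi.add_apply, Pi.sub_apply, Pi.mul_apply] at d
      linear_combination (-1 : ℝ) * d + 2 * exp (a / 2) * h1 - y * exp (a / 2) * h3 - 2 * hr
    have hB : ∀ x y z a : ℝ,
        2 * (exp (a / 2) * exp (a / 2)) * (PD e2 (PD e2 f₄) x y z a
          + x * PD e2 (PD e3 f₄) x y z a + x ^ 2 / 4 * PD e3 (PD e3 f₄) x y z a)
        + PD e4 f₄ x y z a + 2 * PD e4 (PD e4 f₄) x y z a = 0 := by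
      intro x y z a
      have hEh : HasDerivAt (fun t : ℝ => exp (t / 2)) (exp (a / 2) * (1 / 2)) a :=
        ((hasDerivAt_id' a).div_const 2).exp
      have d := deriv_eq_of_eq (fun t => q3 x y z t)
        ((((hEh.const_mul 2).mul
          ((hasDerivAt_pa (PD_smooth hf₂ e2) x y z a).add
            ((hasDerivAt_pa (PD_smooth hf₂ e3) x y z a).const_mul (x / 2)))).sub
          (hasDerivAt_pa hf₄ x y z a)))
        ((hasDerivAt_pa hρ x y z a).const_mul 2)
      rw [PD_comm' hf₂ e4 e2, PD_comm' hf₂ e4 e3] at d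
      have h2 := hw2 x y z a
      have h3 := hw3 x y z a
      have hr := hra x y z a
      simp only [Pi.add_apply, Pi.sub_apply, Pi.mul_apply] at d
      linear_combination (-1 : ℝ) * d + 2 * exp (a / 2) * h2 + x * exp (a / 2) * h3 - 2 * hr
    -- equation (C): e^{2a} u_zz + u_a + u_aa = 0
    have hC : ∀ x y z a : ℝ,
        exp a * exp a * PD e3 (PD e3 f₄) x y z a + PD e4 f₄ x y z a
        + PD e4 (PD e4 f₄) x y z a = 0 := by
      intro x y z a
      have d := deriv_eq_of_eq (fun t => q6 x y z t)
        (((Real.hasDerivAt_exp a).mul (hasDerivAt_pa (PD_smooth hf₃ e3) x y z a)).sub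
          (hasDerivAt_pa hf₄ x y z a))
        (hasDerivAt_pa hρ x y z a)
      rw [PD_comm' hf₃ e4 e3] at d
      have h3 := hx3 x y z a
      have hr := hra x y z a
      linear_combination (-1 : ℝ) * d + exp a * h3 - hr
    -- equation (D)
    have hD : ∀ x y z a : ℝ, exp a * PD e3 f₁ x y z a
        = 2 * (exp a * exp (a / 2)) * (PD e1 (PD e3 f₄) x y z a
            - y / 2 * PD e3 (PD e3 f₄) x y z a)
          + exp (a / 2) * (PD e2 f₄ x y z a + x / 2 * PD e3 f₄ x y z a) := by
      intro x y z a
      have hEh : HasDerivAt (fun t : ℝ => exp (t / 2)) (exp (a / 2) * (1 / 2)) a :=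
        ((hasDerivAt_id' a).div_const 2).exp
      have d := deriv_eq_of_eq (fun t => q4 x y z t)
        ((((Real.hasDerivAt_exp a).mul (hasDerivAt_pa (PD_smooth hf₁ e3) x y z a)).add
          (hEh.mul
            ((hasDerivAt_pa (PD_smooth hf₃ e1) x y z a).sub
              ((hasDerivAt_pa (PD_smooth hf₃ e3) x y z a).const_mul (y / 2))))).add
          (hasDerivAt_pa hf₂ x y z a))
        (hasDerivAt_const a 0)
      rw [PD_comm' hf₁ e4 e3, PD_comm' hf₃ e4 e1, PD_comm' hf₃ e4 e3] at d
      have h3 := hv3 x y z a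
      have hx1' := hx1 x y z a
      have hx3' := hx3 x y z a
      have h8 := q8 x y z a
      have h4 := q4 x y z a
      simp only [Pi.add_apply, Pi.sub_apply, Pi.mul_apply] at d
      linear_combination d - exp a * h3 - exp (a / 2) * hx1' + y / 2 * exp (a / 2) * hx3'
        - h8 + (1 / 2 : ℝ) * h4
    -- equation (E)
    have hE : ∀ x y z a : ℝ, exp a * PD e3 f₂ x y z a
        = 2 * (exp a * exp (a / 2)) * (PD e2 (PD e3 f₄) x y z a
            + x / 2 * PD e3 (PD e3 f₄) x y z a)
          - exp (a / 2) * (PD e1 f₄ x y z a - y / 2 * PD e3 f₄ x y z a) := by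
      intro x y z a
      have hEh : HasDerivAt (fun t : ℝ => exp (t / 2)) (exp (a / 2) * (1 / 2)) a :=
        ((hasDerivAt_id' a).div_const 2).exp
      have d := deriv_eq_of_eq (fun t => q5 x y z t)
        ((((Real.hasDerivAt_exp a).mul (hasDerivAt_pa (PD_smooth hf₂ e3) x y z a)).add
          (hEh.mul
            ((hasDerivAt_pa (PD_smooth hf₃ e2) x y z a).add
              ((hasDerivAt_pa (PD_smooth hf₃ e3) x y z a).const_mul (x / 2))))).sub
          (hasDerivAt_pa hf₁ x y z a))
        (hasDerivAt_const a 0)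
      rw [PD_comm' hf₂ e4 e3, PD_comm' hf₃ e4 e2, PD_comm' hf₃ e4 e3] at d
      have h3 := hw3 x y z a
      have hx2' := hx2 x y z a
      have hx3' := hx3 x y z a
      have h7 := q7 x y z a
      have h5 := q5 x y z a
      simp only [Pi.add_apply, Pi.sub_apply, Pi.mul_apply] at d
      linear_combination d - exp a * h3 - exp (a / 2) * hx2' - x / 2 * exp (a / 2) * hx3'
        + h7 + (1 / 2 : ℝ) * h5
    -- equation (F): differentiate (D) in a
    have hF : ∀ x y z a : ℝ,
        3 * exp a * (PD e1 (PD e3 f₄) x y z a - y / 2 * PD e3 (PD e3 f₄) x y z a)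
        + 2 * exp a * (PD e4 (PD e1 (PD e3 f₄)) x y z a
            - y / 2 * PD e4 (PD e3 (PD e3 f₄)) x y z a)
        + PD e4 (PD e2 f₄) x y z a + x / 2 * PD e4 (PD e3 f₄) x y z a = 0 := by
      intro x y z a
      have hEh : HasDerivAt (fun t : ℝ => exp (t / 2)) (exp (a / 2) * (1 / 2)) a :=
        ((hasDerivAt_id' a).div_const 2).exp
      have d := deriv_eq_of_eq (fun t => hD x y z t)
        ((Real.hasDerivAt_exp a).mul (hasDerivAt_pa (PD_smooth hf₁ e3) x y z a))
        (((((Real.hasDerivAt_exp a).mul hEh).const_mul 2).mul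
          ((hasDerivAt_pa (PD_smooth (PD_smooth hf₄ e3) e1) x y z a).sub
            ((hasDerivAt_pa (PD_smooth (PD_smooth hf₄ e3) e3) x y z a).const_mul (y / 2)))).add
          (hEh.mul
            ((hasDerivAt_pa (PD_smooth hf₄ e2) x y z a).add
              ((hasDerivAt_pa (PD_smooth hf₄ e3) x y z a).const_mul (x / 2)))))
      rw [PD_comm' hf₁ e4 e3] at d
      have h3 := hv3 x y z a
      have hD' := hD x y z a
      have hraw : exp (a / 2) *
          (3 * exp a * (PD e1 (PD e3 f₄) x y z a - y / 2 * PD e3 (PD e3 f₄) x y z a)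
          + 2 * exp a * (PD e4 (PD e1 (PD e3 f₄)) x y z a
              - y / 2 * PD e4 (PD e3 (PD e3 f₄)) x y z a)
          + PD e4 (PD e2 f₄) x y z a + x / 2 * PD e4 (PD e3 f₄) x y z a) = 0 := by
        simp only [Pi.add_apply, Pi.sub_apply, Pi.mul_apply] at d
        linear_combination (-1 : ℝ) * d + exp a * h3 + (1 / 2 : ℝ) * hD'
      exact cancel_exp hraw
    -- equation (F')
    have hF' : ∀ x y z a : ℝ,
        3 * exp a * (PD e2 (PD e3 f₄) x y z a + x / 2 * PD e3 (PD e3 f₄) x y z a)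
        + 2 * exp a * (PD e4 (PD e2 (PD e3 f₄)) x y z a
            + x / 2 * PD e4 (PD e3 (PD e3 f₄)) x y z a)
        - PD e4 (PD e1 f₄) x y z a + y / 2 * PD e4 (PD e3 f₄) x y z a = 0 := by
      intro x y z a
      have hEh : HasDerivAt (fun t : ℝ => exp (t / 2)) (exp (a / 2) * (1 / 2)) a :=
        ((hasDerivAt_id' a).div_const 2).exp
      have d := deriv_eq_of_eq (fun t => hE x y z t)
        ((Real.hasDerivAt_exp a).mul (hasDerivAt_pa (PD_smooth hf₂ e3) x y z a))
        (((((Real.hasDerivAt_exp a).mul hEh).const_mul 2).mul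
          ((hasDerivAt_pa (PD_smooth (PD_smooth hf₄ e3) e2) x y z a).add
            ((hasDerivAt_pa (PD_smooth (PD_smooth hf₄ e3) e3) x y z a).const_mul (x / 2)))).sub
          (hEh.mul
            ((hasDerivAt_pa (PD_smooth hf₄ e1) x y z a).sub
              ((hasDerivAt_pa (PD_smooth hf₄ e3) x y z a).const_mul (y / 2)))))
      rw [PD_comm' hf₂ e4 e3] at d
      have h3 := hw3 x y z a
      have hE' := hE x y z a
      have hraw : exp (a / 2) *
          (3 * exp a * (PD e2 (PD e3 f₄) x y z a + x / 2 * PD e3 (PD e3 f₄) x y z a)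
          + 2 * exp a * (PD e4 (PD e2 (PD e3 f₄)) x y z a
              + x / 2 * PD e4 (PD e3 (PD e3 f₄)) x y z a)
          - PD e4 (PD e1 f₄) x y z a + y / 2 * PD e4 (PD e3 f₄) x y z a) = 0 := by
        simp only [Pi.add_apply, Pi.sub_apply, Pi.mul_apply] at d
        linear_combination (-1 : ℝ) * d + exp a * h3 + (1 / 2 : ℝ) * hE'
      exact cancel_exp hraw
    -- equation (J)
    have hJ : ∀ x y z a : ℝ,
        -3 * exp a * PD e3 (PD e3 f₄) x y z a - 2 * exp a * PD e4 (PD e3 (PD e3 f₄)) x y z a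
        + (PD e4 (PD e1 (PD e1 f₄)) x y z a - y * PD e4 (PD e1 (PD e3 f₄)) x y z a
          + y ^ 2 / 4 * PD e4 (PD e3 (PD e3 f₄)) x y z a)
        + (PD e4 (PD e2 (PD e2 f₄)) x y z a + x * PD e4 (PD e2 (PD e3 f₄)) x y z a
          + x ^ 2 / 4 * PD e4 (PD e3 (PD e3 f₄)) x y z a) = 0 := by
      intro x y z a
      have dY := deriv_eq_of_eq (fun t => hF x t z a)
        ((((((hasDerivAt_py (PD_smooth (PD_smooth hf₄ e3) e1) x y z a).sub
            (((hasDerivAt_id' y).div_const 2).mul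
              (hasDerivAt_py (PD_smooth (PD_smooth hf₄ e3) e3) x y z a))).const_mul
                (3 * exp a)).add
          (((hasDerivAt_py (PD_smooth (PD_smooth (PD_smooth hf₄ e3) e1) e4) x y z a).sub
            (((hasDerivAt_id' y).div_const 2).mul
              (hasDerivAt_py (PD_smooth (PD_smooth (PD_smooth hf₄ e3) e3) e4) x y z a))).const_mul
                (2 * exp a))).add
          (hasDerivAt_py (PD_smooth (PD_smooth hf₄ e2) e4) x y z a)).add
            ((hasDerivAt_py (PD_smooth (PD_smooth hf₄ e3) e4) x y z a).const_mul (x / 2)))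
        (hasDerivAt_const y 0)
      rw [PD_comm' (PD_smooth (PD_smooth hf₄ e3) e1) e2 e4,
          PD_comm' (PD_smooth (PD_smooth hf₄ e3) e3) e2 e4,
          PD_comm' (PD_smooth hf₄ e2) e2 e4,
          PD_comm' (PD_smooth hf₄ e3) e2 e4,
          PD_comm' (PD_smooth hf₄ e3) e2 e1] at dY
      have dZ := deriv_eq_of_eq (fun t => hF x y t a)
        ((((((hasDerivAt_pz (PD_smooth (PD_smooth hf₄ e3) e1) x y z a).sub
            ((hasDerivAt_pz (PD_smooth (PD_smooth hf₄ e3) e3) x y z a).const_mul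
              (y / 2))).const_mul (3 * exp a)).add
          (((hasDerivAt_pz (PD_smooth (PD_smooth (PD_smooth hf₄ e3) e1) e4) x y z a).sub
            ((hasDerivAt_pz (PD_smooth (PD_smooth (PD_smooth hf₄ e3) e3) e4) x y z a).const_mul
              (y / 2))).const_mul (2 * exp a))).add
          (hasDerivAt_pz (PD_smooth (PD_smooth hf₄ e2) e4) x y z a)).add
            ((hasDerivAt_pz (PD_smooth (PD_smooth hf₄ e3) e4) x y z a).const_mul (x / 2)))
        (hasDerivAt_const z 0)
      rw [PD_comm' (PD_smooth (PD_smooth hf₄ e3) e1) e3 e4,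
          PD_comm' (PD_smooth (PD_smooth hf₄ e3) e3) e3 e4,
          PD_comm' (PD_smooth hf₄ e2) e3 e4,
          PD_comm' (PD_smooth hf₄ e3) e3 e4,
          PD_comm' (PD_smooth hf₄ e3) e3 e1,
          PD_comm' hf₄ e3 e2] at dZ
      have dX := deriv_eq_of_eq (fun t => hF' t y z a)
        ((((((hasDerivAt_px (PD_smooth (PD_smooth hf₄ e3) e2) x y z a).add
            (((hasDerivAt_id' x).div_const 2).mul
              (hasDerivAt_px (PD_smooth (PD_smooth hf₄ e3) e3) x y z a))).const_mul
                (3 * exp a)).add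
          (((hasDerivAt_px (PD_smooth (PD_smooth (PD_smooth hf₄ e3) e2) e4) x y z a).add
            (((hasDerivAt_id' x).div_const 2).mul
              (hasDerivAt_px (PD_smooth (PD_smooth (PD_smooth hf₄ e3) e3) e4) x y z a))).const_mul
                (2 * exp a))).sub
          (hasDerivAt_px (PD_smooth (PD_smooth hf₄ e1) e4) x y z a)).add
          ((hasDerivAt_px (PD_smooth (PD_smooth hf₄ e3) e4) x y z a).const_mul (y / 2)))
        (hasDerivAt_const x 0)
      rw [PD_comm' (PD_smooth (PD_smooth hf₄ e3) e2) e1 e4,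
          PD_comm' (PD_smooth (PD_smooth hf₄ e3) e3) e1 e4,
          PD_comm' (PD_smooth hf₄ e1) e1 e4,
          PD_comm' (PD_smooth hf₄ e3) e1 e4] at dX
      have dZ' := deriv_eq_of_eq (fun t => hF' x y t a)
        ((((((hasDerivAt_pz (PD_smooth (PD_smooth hf₄ e3) e2) x y z a).add
            ((hasDerivAt_pz (PD_smooth (PD_smooth hf₄ e3) e3) x y z a).const_mul
              (x / 2))).const_mul (3 * exp a)).add
          (((hasDerivAt_pz (PD_smooth (PD_smooth (PD_smooth hf₄ e3) e2) e4) x y z a).add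
            ((hasDerivAt_pz (PD_smooth (PD_smooth (PD_smooth hf₄ e3) e3) e4) x y z a).const_mul
              (x / 2))).const_mul (2 * exp a))).sub
          (hasDerivAt_pz (PD_smooth (PD_smooth hf₄ e1) e4) x y z a)).add
          ((hasDerivAt_pz (PD_smooth (PD_smooth hf₄ e3) e4) x y z a).const_mul (y / 2)))
        (hasDerivAt_const z 0)
      rw [PD_comm' (PD_smooth (PD_smooth hf₄ e3) e2) e3 e4,
          PD_comm' (PD_smooth (PD_smooth hf₄ e3) e3) e3 e4,
          PD_comm' (PD_smooth hf₄ e1) e3 e4,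
          PD_comm' (PD_smooth hf₄ e3) e3 e4,
          PD_comm' (PD_smooth hf₄ e3) e3 e2,
          PD_comm' hf₄ e3 e1] at dZ'
      linear_combination dY + x / 2 * dZ - dX + y / 2 * dZ'
    -- a-derivatives of (A), (B), (C)
    have hAa : ∀ x y z a : ℝ,
        2 * (exp (a / 2) * exp (a / 2)) * (PD e1 (PD e1 f₄) x y z a
          - y * PD e1 (PD e3 f₄) x y z a + y ^ 2 / 4 * PD e3 (PD e3 f₄) x y z a)
        + 2 * (exp (a / 2) * exp (a / 2)) * (PD e4 (PD e1 (PD e1 f₄)) x y z a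
          - y * PD e4 (PD e1 (PD e3 f₄)) x y z a + y ^ 2 / 4 * PD e4 (PD e3 (PD e3 f₄)) x y z a)
        + PD e4 (PD e4 f₄) x y z a + 2 * PD e4 (PD e4 (PD e4 f₄)) x y z a = 0 := by
      intro x y z a
      have hEh : HasDerivAt (fun t : ℝ => exp (t / 2)) (exp (a / 2) * (1 / 2)) a :=
        ((hasDerivAt_id' a).div_const 2).exp
      have d := deriv_eq_of_eq (fun t => hA x y z t)
        (((((hEh.mul hEh).const_mul 2).mul
          (((hasDerivAt_pa (PD_smooth (PD_smooth hf₄ e1) e1) x y z a).sub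
            ((hasDerivAt_pa (PD_smooth (PD_smooth hf₄ e3) e1) x y z a).const_mul y)).add
            ((hasDerivAt_pa (PD_smooth (PD_smooth hf₄ e3) e3) x y z a).const_mul
              (y ^ 2 / 4)))).add
          (hasDerivAt_pa (PD_smooth hf₄ e4) x y z a)).add
          ((hasDerivAt_pa (PD_smooth (PD_smooth hf₄ e4) e4) x y z a).const_mul 2))
        (hasDerivAt_const a 0)
      simp only [Pi.add_apply, Pi.sub_apply, Pi.mul_apply] at d
      linear_combination d
    have hBa : ∀ x y z a : ℝ,
        2 * (exp (a / 2) * exp (a / 2)) * (PD e2 (PD e2 f₄) x y z a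
          + x * PD e2 (PD e3 f₄) x y z a + x ^ 2 / 4 * PD e3 (PD e3 f₄) x y z a)
        + 2 * (exp (a / 2) * exp (a / 2)) * (PD e4 (PD e2 (PD e2 f₄)) x y z a
          + x * PD e4 (PD e2 (PD e3 f₄)) x y z a + x ^ 2 / 4 * PD e4 (PD e3 (PD e3 f₄)) x y z a)
        + PD e4 (PD e4 f₄) x y z a + 2 * PD e4 (PD e4 (PD e4 f₄)) x y z a = 0 := by
      intro x y z a
      have hEh : HasDerivAt (fun t : ℝ => exp (t / 2)) (exp (a / 2) * (1 / 2)) a :=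
        ((hasDerivAt_id' a).div_const 2).exp
      have d := deriv_eq_of_eq (fun t => hB x y z t)
        (((((hEh.mul hEh).const_mul 2).mul
          (((hasDerivAt_pa (PD_smooth (PD_smooth hf₄ e2) e2) x y z a).add
            ((hasDerivAt_pa (PD_smooth (PD_smooth hf₄ e3) e2) x y z a).const_mul x)).add
            ((hasDerivAt_pa (PD_smooth (PD_smooth hf₄ e3) e3) x y z a).const_mul
              (x ^ 2 / 4)))).add
          (hasDerivAt_pa (PD_smooth hf₄ e4) x y z a)).add
          ((hasDerivAt_pa (PD_smooth (PD_smooth hf₄ e4) e4) x y z a).const_mul 2))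
        (hasDerivAt_const a 0)
      simp only [Pi.add_apply, Pi.sub_apply, Pi.mul_apply] at d
      linear_combination d
    have hCa : ∀ x y z a : ℝ,
        2 * (exp a * exp a) * PD e3 (PD e3 f₄) x y z a
        + exp a * exp a * PD e4 (PD e3 (PD e3 f₄)) x y z a
        + PD e4 (PD e4 f₄) x y z a + PD e4 (PD e4 (PD e4 f₄)) x y z a = 0 := by
      intro x y z a
      have d := deriv_eq_of_eq (fun t => hC x y z t)
        (((((Real.hasDerivAt_exp a).mul (Real.hasDerivAt_exp a)).mul
          (hasDerivAt_pa (PD_smooth (PD_smooth hf₄ e3) e3) x y z a)).add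
          (hasDerivAt_pa (PD_smooth hf₄ e4) x y z a)).add
          (hasDerivAt_pa (PD_smooth (PD_smooth hf₄ e4) e4) x y z a))
        (hasDerivAt_const a 0)
      simp only [Pi.add_apply, Pi.sub_apply, Pi.mul_apply] at d
      linear_combination d
    -- the key conclusion : ∂ₐ∂ₐ f₄ = 0
    have haa : ∀ x y z a : ℝ, PD e4 (PD e4 f₄) x y z a = 0 := by
      intro x y z a
      have hexp : exp (a / 2) * exp (a / 2) = exp a := by
        rw [← Real.exp_add]; norm_num
      linear_combination (1 / 4 : ℝ) * hA x y z a + (1 / 4 : ℝ) * hB x y z a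
        - (1 / 4 : ℝ) * hAa x y z a - (1 / 4 : ℝ) * hBa x y z a
        - (1 / 2 : ℝ) * hC x y z a + hCa x y z a + exp a / 2 * hJ x y z a
        + (1 / 2 : ℝ) * (PD e4 (PD e1 (PD e1 f₄)) x y z a
            - y * PD e4 (PD e1 (PD e3 f₄)) x y z a
            + y ^ 2 / 4 * PD e4 (PD e3 (PD e3 f₄)) x y z a
            + PD e4 (PD e2 (PD e2 f₄)) x y z a + x * PD e4 (PD e2 (PD e3 f₄)) x y z a
            + x ^ 2 / 4 * PD e4 (PD e3 (PD e3 f₄)) x y z a) * hexp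
    -- ∂ₐ f₄ is independent of a
    have hconst : ∀ x y z a : ℝ, PD e4 f₄ x y z a = PD e4 f₄ x y z 0 := by
      intro x y z a
      have hdiff : Differentiable ℝ (fun t => PD e4 f₄ x y z t) :=
        fun t => (hasDerivAt_pa (PD_smooth hf₄ e4) x y z t).differentiableAt
      have hder : ∀ t, deriv (fun t => PD e4 f₄ x y z t) t = 0 := fun t => by
        rw [(hasDerivAt_pa (PD_smooth hf₄ e4) x y z t).deriv]; exact haa x y z t
      exact is_const_of_deriv_eq_zero hdiff hder a 0
    have hCW : ∀ x y z a : ℝ,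
        exp a * exp a * PD e3 (PD e3 f₄) x y z a = -(PD e4 f₄ x y z 0) := by
      intro x y z a
      linear_combination hC x y z a - haa x y z a - hconst x y z a
    have h3g : ∀ x y z a : ℝ, PD e3 (PD e4 f₄) x y z a = PD e3 (PD e4 f₄) x y z 0 := by
      intro x y z a
      exact deriv_eq_of_eq (fun t => hconst x y t a)
        (hasDerivAt_pz (PD_smooth hf₄ e4) x y z a) (hasDerivAt_pz (PD_smooth hf₄ e4) x y z 0)
    have h33g : ∀ x y z a : ℝ,
        PD e3 (PD e3 (PD e4 f₄)) x y z a = PD e3 (PD e3 (PD e4 f₄)) x y z 0 := by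
      intro x y z a
      exact deriv_eq_of_eq (fun t => h3g x y t a)
        (hasDerivAt_pz (PD_smooth (PD_smooth hf₄ e4) e3) x y z a)
        (hasDerivAt_pz (PD_smooth (PD_smooth hf₄ e4) e3) x y z 0)
    have hsw : PD e4 (PD e3 (PD e3 f₄)) = PD e3 (PD e3 (PD e4 f₄)) := by
      rw [PD_comm' (PD_smooth hf₄ e3) e4 e3, PD_comm' hf₄ e4 e3]
    have hm : ∀ x y z a : ℝ,
        PD e4 (PD e3 (PD e3 f₄)) x y z a = PD e4 (PD e3 (PD e3 f₄)) x y z 0 := by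
      intro x y z a; rw [hsw]; exact h33g x y z a
    -- conclude ∂ₐ f₄ = 0
    have hv : ∀ x y z : ℝ, PD e4 f₄ x y z 0 = 0 := by
      intro x y z
      have hWf : ∀ t : ℝ, PD e3 (PD e3 f₄) x y z t
          = -(PD e4 f₄ x y z 0) * exp (-(2 * t)) := by
        intro t
        have h2 : exp (2 * t) * PD e3 (PD e3 f₄) x y z t = -(PD e4 f₄ x y z 0) := by
          rw [show (2 * t) = t + t by ring, Real.exp_add]
          linear_combination hCW x y z t
        have hne := Real.exp_ne_zero (2 * t)
        rw [Real.exp_neg]; field_simp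
        linear_combination h2
      have dgen : ∀ a : ℝ, PD e4 (PD e3 (PD e3 f₄)) x y z a
          = -(PD e4 f₄ x y z 0) * (exp (-(2 * a)) * -(2 * 1)) := by
        intro a
        exact deriv_eq_of_eq hWf
          (hasDerivAt_pa (PD_smooth (PD_smooth hf₄ e3) e3) x y z a)
          (((((hasDerivAt_id' a).const_mul 2).neg).exp).const_mul (-(PD e4 f₄ x y z 0)))
      have ha0 : exp (-(2 * (0 : ℝ))) = 1 := by norm_num
      have ha1 : exp (-(2 * (1 : ℝ))) = exp (-2 : ℝ) := by norm_num
      have heq := (dgen 1).symm.trans ((hm x y z 1).trans (dgen 0))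
      rw [ha1, ha0] at heq
      have hfac : PD e4 f₄ x y z 0 * (1 - exp (-2 : ℝ)) = 0 := by
        linear_combination (-1 / 2 : ℝ) * heq
      have hlt : exp (-2 : ℝ) < 1 := by
        have h0 : exp (-2 : ℝ) < exp 0 := Real.exp_lt_exp.mpr (by norm_num)
        rwa [Real.exp_zero] at h0
      rcases mul_eq_zero.mp hfac with h | h
      · exact h
      · exfalso; linarith
    have hv0 : ∀ x y z a : ℝ, PD e4 f₄ x y z a = 0 :=
      fun x y z a => (hconst x y z a).trans (hv x y z)
    have hW0 : ∀ x y z a : ℝ, PD e3 (PD e3 f₄) x y z a = 0 := by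
      intro x y z a
      have h := hCW x y z a
      rw [hv x y z] at h
      have h' : exp a * (exp a * PD e3 (PD e3 f₄) x y z a) = 0 := by linear_combination h
      exact cancel_exp (cancel_exp h')
    -- f₄ independent of a
    have hfa : ∀ x y z a : ℝ, f₄ x y z a = f₄ x y z 0 := by
      intro x y z a
      have hdiff : Differentiable ℝ (fun t => f₄ x y z t) :=
        fun t => (hasDerivAt_pa hf₄ x y z t).differentiableAt
      have hder : ∀ t, deriv (fun t => f₄ x y z t) t = 0 := fun t => by
        rw [(hasDerivAt_pa hf₄ x y z t).deriv]; exact hv0 x y z t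
      exact is_const_of_deriv_eq_zero hdiff hder a 0
    -- ∂_z f₄ independent of z
    have hzc : ∀ x y z a : ℝ, PD e3 f₄ x y z a = PD e3 f₄ x y 0 a := by
      intro x y z a
      have hdiff : Differentiable ℝ (fun t => PD e3 f₄ x y t a) :=
        fun t => (hasDerivAt_pz (PD_smooth hf₄ e3) x y t a).differentiableAt
      have hder : ∀ t, deriv (fun t => PD e3 f₄ x y t a) t = 0 := fun t => by
        rw [(hasDerivAt_pz (PD_smooth hf₄ e3) x y t a).deriv]; exact hW0 x y t a
      exact is_const_of_deriv_eq_zero hdiff hder z 0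
    -- f₄ affine in z
    have haff : ∀ x y z a : ℝ, f₄ x y z a = f₄ x y 0 a + z * PD e3 f₄ x y 0 a := by
      intro x y z a
      have hdiff : Differentiable ℝ (fun t => f₄ x y t a - t * PD e3 f₄ x y 0 a) :=
        fun t => ((hasDerivAt_pz hf₄ x y t a).sub
          ((hasDerivAt_id' t).mul_const (PD e3 f₄ x y 0 a))).differentiableAt
      have hder : ∀ t, deriv (fun t => f₄ x y t a - t * PD e3 f₄ x y 0 a) t = 0 := fun t => by
        erw [((hasDerivAt_pz hf₄ x y t a).sub
          ((hasDerivAt_id' t).mul_const (PD e3 f₄ x y 0 a))).deriv]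
        rw [hzc x y t a]; ring
      have h := is_const_of_deriv_eq_zero hdiff hder z 0
      simp only [zero_mul] at h
      linarith [h]
    refine ⟨fun x y => f₄ x y 0 0, fun x y => PD e3 f₄ x y 0 0, ?_, ?_, ?_⟩
    · exact hf₄.comp  (contDiff_fst.prodMk (contDiff_snd.prodMk (contDiff_const.prodMk contDiff_const)))
    · exact (PD_smooth hf₄ e3).comp
        (contDiff_fst.prodMk (contDiff_snd.prodMk (contDiff_const.prodMk contDiff_const)))
    · intro x y z a
      rw [hfa x y z a, haff x y z 0]
end

section
/- Let z be a point of the hyperbolic upper half-plane ℍ and let a ∈ ℝ be a boundary point. Then the Busemann limit toward the boundary point a exists and equals log(((Re z − a)² + (Im z)²)/Im z): the function t ↦ dist(z, γ(t)) − t, where γ(t) is the point of ℍ with real part a and imaginary part e^{−t}, tends to log(((Re z − a)² + (Im z)²)/Im z) as t → +∞. -/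
/-!
Writing `s = Im γ(t) = e⁻ᵗ` and `d = dist(z, γ(t))`, the formula for `cosh d` on `ℍ` gives
`eᵈ s + e⁻ᵈ s = 2 s + |z - γ(t)|² / Im z`. As `t → ∞`, `s → 0` and `e⁻ᵈ s ≤ s`, so
`e^(d - t) = eᵈ s → |z - a|² / Im z`, and taking logarithms gives the Busemann limit.
-/

open Real Filter Topology

namespace UpperHalfPlane

theorem exp_dist_mul_im (z w : ℍ) :
    exp (dist z w) * w.im = 2 * w.im + dist (z : ℂ) w ^ 2 / z.im - exp (-dist z w) * w.im := by
  have h := cosh_dist z w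
  rw [cosh_eq] at h
  field_simp [z.im_pos.ne', w.im_pos.ne'] at h ⊢
  linarith

theorem tendsto_exp_dist_mul_im {α : Type*} {l : Filter α} (z : ℍ) {w : α → ℍ} {a : ℝ}
    (hw : Tendsto (fun x => (w x : ℂ)) l (𝓝 a)) :
    Tendsto (fun x => exp (dist z (w x)) * (w x).im) l (𝓝 (dist (z : ℂ) a ^ 2 / z.im)) := by
  have him : Tendsto (fun x => (w x).im) l (𝓝 0) := by
    simpa only [Function.comp_def, coe_im, Complex.ofReal_im] using
      (Complex.continuous_im.tendsto _).comp hw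
  have hdecay : Tendsto (fun x => exp (-dist z (w x)) * (w x).im) l (𝓝 0) := by
    refine squeeze_zero (fun x => (mul_pos (exp_pos _) (w x).im_pos).le) (fun x => ?_) him
    exact mul_le_of_le_one_left (w x).im_pos.le (exp_le_one_iff.mpr (neg_nonpos.mpr dist_nonneg))
  have hsq : Tendsto (fun x => dist (z : ℂ) (w x) ^ 2 / z.im) l (𝓝 (dist (z : ℂ) a ^ 2 / z.im)) :=
    ((tendsto_const_nhds.dist hw).pow 2).div_const _
  simp_rw [exp_dist_mul_im]
  simpa using ((him.const_mul 2).add hsq).sub hdecay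

noncomputable def verticalRay (a t : ℝ) : ℍ :=
  ⟨(a : ℂ) + (Real.exp (-t) : ℂ) * Complex.I, by
    simp only [Complex.add_im, Complex.ofReal_im, Complex.mul_I_im, Complex.ofReal_re, zero_add]
    exact Real.exp_pos (-t)⟩

theorem verticalRay_im (a t : ℝ) : (verticalRay a t).im = exp (-t) := by
  simp only [verticalRay, UpperHalfPlane.im, Complex.add_im, Complex.ofReal_im,
    Complex.mul_I_im, Complex.ofReal_re, zero_add]

theorem tendsto_coe_verticalRay (a : ℝ) :
    Tendsto (fun t => (verticalRay a t : ℂ)) atTop (𝓝 a) := by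
  have hexp : Tendsto (fun t : ℝ => (exp (-t) : ℂ)) atTop (𝓝 0) :=
    (Complex.continuous_ofReal.tendsto 0).comp tendsto_exp_neg_atTop_nhds_zero
  have h := (tendsto_const_nhds (x := (a : ℂ))).add (hexp.mul_const Complex.I)
  rw [zero_mul, add_zero] at h
  exact h

theorem dist_verticalRay_sub_eq_log (z : ℍ) (a t : ℝ) :
    dist z (verticalRay a t) - t = log (exp (dist z (verticalRay a t)) * (verticalRay a t).im) := by
  rw [verticalRay_im, ← exp_add, log_exp, sub_eq_add_neg]

end UpperHalfPlane

/-- The Busemann limit on the hyperbolic upper half-plane toward a boundary point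
`a ∈ ℝ`: with `γ(t)` the point with real part `a` and imaginary part `e⁻ᵗ` (a
unit-speed geodesic ray converging to `a`), one has
`dist(z, γ(t)) − t → log(((Re z − a)² + (Im z)²) / Im z)` as `t → ∞`. -/
theorem busemann_limit_at_boundary_point (z : UpperHalfPlane) (a : ℝ) :
    Tendsto
      (fun t : ℝ =>
        dist z (⟨(a : ℂ) + (Real.exp (-t) : ℂ) * Complex.I, by
          simp only [Complex.add_im, Complex.ofReal_im, Complex.mul_I_im,
            Complex.ofReal_re, zero_add]
          exact Real.exp_pos (-t)⟩ : UpperHalfPlane) - t)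
      atTop (𝓝 (Real.log (((z.re - a) ^ 2 + z.im ^ 2) / z.im))) := by
  have hdist : dist (z : ℂ) a ^ 2 = (z.re - a) ^ 2 + z.im ^ 2 := by
    rw [Complex.dist_eq, Complex.sq_norm, Complex.normSq_apply]
    simp only [Complex.sub_re, Complex.sub_im, UpperHalfPlane.coe_re, UpperHalfPlane.coe_im,
      Complex.ofReal_re, Complex.ofReal_im, sub_zero]
    ring
  have hlim := UpperHalfPlane.tendsto_exp_dist_mul_im z (UpperHalfPlane.tendsto_coe_verticalRay a)
  rw [hdist] at hlim
  have hpos : ((z.re - a) ^ 2 + z.im ^ 2) / z.im ≠ 0 := by positivity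
  exact ((continuousAt_log hpos).tendsto.comp hlim).congr fun t =>
    (UpperHalfPlane.dist_verticalRay_sub_eq_log z a t).symm
end
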